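/- arXiv:2108.01919 — 17 statements merged into one kernel-verified Lean document; each statement's English description precedes it below -/
import Mathlib

section
/- If V : ℕ → ℝ is nondecreasing, then for each action the state–action value function is nondecreasing in the state: for all s1 ≤ s2 one has Q0(V,s1) ≤ Q0(V,s2), Q1(V,s1) ≤ Q1(V,s2) and Q2(V,s1) ≤ Q2(V,s2); consequently the Bellman image TV is nondecreasing. -/
noncomputable def Q0 (eps : ℝ) (V : ℕ → ℝ) (s : ℕ) : ℝ :=
  (s : ℝ) + (1 - eps) * V s + eps * V (s + 1)

noncomputable def Q1 (Tu : ℕ) (Cu om p eps : ℝ) (V : ℕ → ℝ) (s : ℕ) : ℝ :=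
  (s : ℝ) + ((Tu : ℝ) - 1) / 2 + om * Cu + (1 - eps / (Tu : ℝ)) * V s
    + (eps / (Tu : ℝ)) * p ^ Tu * V Tu
    + (eps / (Tu : ℝ)) * (1 - p ^ Tu) * V (s + Tu)

noncomputable def Q2 (Tu' Tp : ℕ) (Cu Cp om p eps : ℝ) (V : ℕ → ℝ) (s : ℕ) : ℝ :=
  (s : ℝ) + (((Tp : ℝ) + (Tu' : ℝ)) - 1) / 2
    + om * (((Tp : ℝ) * Cp + (Tu' : ℝ) * Cu) / ((Tp : ℝ) + (Tu' : ℝ)))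
    + (1 - eps / ((Tp : ℝ) + (Tu' : ℝ))) * V s
    + (eps / ((Tp : ℝ) + (Tu' : ℝ))) * p ^ Tu' * V (Tp + Tu')
    + (eps / ((Tp : ℝ) + (Tu' : ℝ))) * (1 - p ^ Tu') * V (s + (Tp + Tu'))

noncomputable def Tbell (Tu Tu' Tp : ℕ) (Cu Cp om p eps : ℝ) (V : ℕ → ℝ) (s : ℕ) : ℝ :=
  min (Q0 eps V s) (min (Q1 Tu Cu om p eps V s) (Q2 Tu' Tp Cu Cp om p eps V s))

theorem stmt0 (Tu Tu' Tp : ℕ) (hTu : 0 < Tu) (hTu' : 0 < Tu') (hTp : 0 < Tp)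
    (Cu Cp om p eps : ℝ) (hCu : 0 ≤ Cu) (hCp : 0 ≤ Cp) (hom : 0 ≤ om)
    (hp0 : 0 < p) (hp1 : p ≤ 1) (heps0 : 0 < eps) (heps1 : eps ≤ 1)
    (V : ℕ → ℝ) (hV : ∀ s1 s2 : ℕ, s1 ≤ s2 → V s1 ≤ V s2) :
    (∀ s1 s2 : ℕ, s1 ≤ s2 → Q0 eps V s1 ≤ Q0 eps V s2) ∧
    (∀ s1 s2 : ℕ, s1 ≤ s2 → Q1 Tu Cu om p eps V s1 ≤ Q1 Tu Cu om p eps V s2) ∧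
    (∀ s1 s2 : ℕ, s1 ≤ s2 → Q2 Tu' Tp Cu Cp om p eps V s1 ≤ Q2 Tu' Tp Cu Cp om p eps V s2) ∧
    (∀ s1 s2 : ℕ, s1 ≤ s2 →
      Tbell Tu Tu' Tp Cu Cp om p eps V s1 ≤ Tbell Tu Tu' Tp Cu Cp om p eps V s2) := by
  have hTuR : (1 : ℝ) ≤ (Tu : ℝ) := by exact_mod_cast hTu
  have hTT : (1 : ℝ) ≤ (Tp : ℝ) + (Tu' : ℝ) := by
    have : (1 : ℝ) ≤ (Tp : ℝ) := by exact_mod_cast hTp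
    have h2 : (0 : ℝ) ≤ (Tu' : ℝ) := Nat.cast_nonneg _
    linarith
  have hTTpos : (0 : ℝ) < (Tp : ℝ) + (Tu' : ℝ) := by linarith
  have hd1 : 0 ≤ eps / (Tu : ℝ) := div_nonneg heps0.le (by linarith)
  have hd1' : eps / (Tu : ℝ) ≤ 1 := by
    rw [div_le_one (by linarith)]; linarith
  have hd2 : 0 ≤ eps / ((Tp : ℝ) + (Tu' : ℝ)) := div_nonneg heps0.le hTTpos.le
  have hd2' : eps / ((Tp : ℝ) + (Tu' : ℝ)) ≤ 1 := by
    rw [div_le_one hTTpos]; linarith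
  have hpu : p ^ Tu ≤ 1 := pow_le_one₀ hp0.le hp1
  have hpu0 : 0 ≤ p ^ Tu := pow_nonneg hp0.le _
  have hpu' : p ^ Tu' ≤ 1 := pow_le_one₀ hp0.le hp1
  have hpu'0 : 0 ≤ p ^ Tu' := pow_nonneg hp0.le _
  refine ⟨?_, ?_, ?_, ?_⟩
  · intro s1 s2 h
    have hc : (s1 : ℝ) ≤ (s2 : ℝ) := by exact_mod_cast h
    have h1 := hV s1 s2 h
    have h2 := hV (s1 + 1) (s2 + 1) (by omega)
    unfold Q0
    have := mul_le_mul_of_nonneg_left h1 (by linarith : (0:ℝ) ≤ 1 - eps)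
    have := mul_le_mul_of_nonneg_left h2 heps0.le
    linarith
  · intro s1 s2 h
    have hc : (s1 : ℝ) ≤ (s2 : ℝ) := by exact_mod_cast h
    have h1 := hV s1 s2 h
    have h2 := hV (s1 + Tu) (s2 + Tu) (by omega)
    unfold Q1
    have := mul_le_mul_of_nonneg_left h1 (by linarith : (0:ℝ) ≤ 1 - eps / (Tu : ℝ))
    have := mul_le_mul_of_nonneg_left h2 (mul_nonneg hd1 (by linarith : (0:ℝ) ≤ 1 - p ^ Tu))
    linarith
  · intro s1 s2 h
    have hc : (s1 : ℝ) ≤ (s2 : ℝ) := by exact_mod_cast h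
    have h1 := hV s1 s2 h
    have h2 := hV (s1 + (Tp + Tu')) (s2 + (Tp + Tu')) (by omega)
    unfold Q2
    have := mul_le_mul_of_nonneg_left h1
      (by linarith : (0:ℝ) ≤ 1 - eps / ((Tp : ℝ) + (Tu' : ℝ)))
    have := mul_le_mul_of_nonneg_left h2 (mul_nonneg hd2 (by linarith : (0:ℝ) ≤ 1 - p ^ Tu'))
    linarith
  · intro s1 s2 h
    -- reuse the first three parts
    have hc : (s1 : ℝ) ≤ (s2 : ℝ) := by exact_mod_cast h
    have h1 := hV s1 s2 h
    have hA : Q0 eps V s1 ≤ Q0 eps V s2 := by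
      have h2 := hV (s1 + 1) (s2 + 1) (by omega)
      unfold Q0
      have := mul_le_mul_of_nonneg_left h1 (by linarith : (0:ℝ) ≤ 1 - eps)
      have := mul_le_mul_of_nonneg_left h2 heps0.le
      linarith
    have hB : Q1 Tu Cu om p eps V s1 ≤ Q1 Tu Cu om p eps V s2 := by
      have h2 := hV (s1 + Tu) (s2 + Tu) (by omega)
      unfold Q1
      have := mul_le_mul_of_nonneg_left h1 (by linarith : (0:ℝ) ≤ 1 - eps / (Tu : ℝ))
      have := mul_le_mul_of_nonneg_left h2 (mul_nonneg hd1 (by linarith : (0:ℝ) ≤ 1 - p ^ Tu))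
      linarith
    have hC : Q2 Tu' Tp Cu Cp om p eps V s1 ≤ Q2 Tu' Tp Cu Cp om p eps V s2 := by
      have h2 := hV (s1 + (Tp + Tu')) (s2 + (Tp + Tu')) (by omega)
      unfold Q2
      have := mul_le_mul_of_nonneg_left h1
        (by linarith : (0:ℝ) ≤ 1 - eps / ((Tp : ℝ) + (Tu' : ℝ)))
      have := mul_le_mul_of_nonneg_left h2 (mul_nonneg hd2 (by linarith : (0:ℝ) ≤ 1 - p ^ Tu'))
      linarith
    unfold Tbell
    exact min_le_min hA (min_le_min hB hC)
end

section
/- Define the value-iteration sequence by V_0(s) = 0 for all s ∈ ℕ and V_{k+1} = T V_k. Then for every k ∈ ℕ the iterate V_k is nondecreasing, i.e., V_k(s1) ≤ V_k(s2) whenever s1 ≤ s2. -/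
/-! Each action's Q-value is the running cost s plus constants plus a combination, with
nonnegative weights, of V at s, at a fixed state, and at a state further right. Hence
monotonicity of V passes to every Q-value, then to their minimum T V, and by induction to all
value iterates starting from the (monotone) zero function. -/

theorem div_natCast_le_one {eps : ℝ} (heps0 : 0 ≤ eps) (heps1 : eps ≤ 1) {n : ℕ} (hn : 0 < n) :
    eps / (n : ℝ) ≤ 1 :=
  (div_le_self heps0 (mod_cast hn)).trans heps1

section

variable {V : ℕ → ℝ}

theorem Monotone.add_uniformized_jump {f : ℕ → ℝ} (hf : Monotone f) (hV : Monotone V)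
    {α q : ℝ} (hα0 : 0 ≤ α) (hα1 : α ≤ 1) (hq1 : q ≤ 1) (e d : ℕ) :
    Monotone fun s => f s + (1 - α) * V s + α * q * V e + α * (1 - q) * V (s + d) := by
  intro s t hst
  have hα : 0 ≤ 1 - α := sub_nonneg.mpr hα1
  have hq : 0 ≤ α * (1 - q) := mul_nonneg hα0 (sub_nonneg.mpr hq1)
  dsimp only
  gcongr
  · exact hf hst
  · exact hV hst
  · exact hV (Nat.add_le_add_right hst d)

theorem monotone_Q0 {eps : ℝ} (heps0 : 0 ≤ eps) (heps1 : eps ≤ 1) (hV : Monotone V) :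
    Monotone (Q0 eps V) := by
  intro s t hst
  have heps : 0 ≤ 1 - eps := sub_nonneg.mpr heps1
  unfold Q0
  gcongr
  · exact hV hst
  · exact hV (Nat.add_le_add_right hst 1)

theorem monotone_Q1 {Tu : ℕ} (hTu : 0 < Tu) {Cu om p eps : ℝ} (hp0 : 0 ≤ p) (hp1 : p ≤ 1)
    (heps0 : 0 ≤ eps) (heps1 : eps ≤ 1) (hV : Monotone V) :
    Monotone (Q1 Tu Cu om p eps V) :=
  ((Nat.mono_cast.add_const _).add_const _).add_uniformized_jump hV (by positivity)
    (div_natCast_le_one heps0 heps1 hTu) (pow_le_one₀ hp0 hp1) Tu Tu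

theorem monotone_Q2 {Tu' Tp : ℕ} (hTp : 0 < Tp) {Cu Cp om p eps : ℝ} (hp0 : 0 ≤ p)
    (hp1 : p ≤ 1) (heps0 : 0 ≤ eps) (heps1 : eps ≤ 1) (hV : Monotone V) :
    Monotone (Q2 Tu' Tp Cu Cp om p eps V) := by
  have hT : eps / ((Tp : ℝ) + (Tu' : ℝ)) ≤ 1 := by
    exact_mod_cast div_natCast_le_one heps0 heps1 (Nat.add_pos_left hTp Tu')
  exact ((Nat.mono_cast.add_const _).add_const _).add_uniformized_jump hV (by positivity) hT
    (pow_le_one₀ hp0 hp1) (Tp + Tu') (Tp + Tu')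

theorem monotone_Tbell {Tu Tu' Tp : ℕ} (hTu : 0 < Tu) (hTp : 0 < Tp) {Cu Cp om p eps : ℝ}
    (hp0 : 0 ≤ p) (hp1 : p ≤ 1) (heps0 : 0 ≤ eps) (heps1 : eps ≤ 1) (hV : Monotone V) :
    Monotone (Tbell Tu Tu' Tp Cu Cp om p eps V) :=
  (monotone_Q0 heps0 heps1 hV).min
    ((monotone_Q1 hTu hp0 hp1 heps0 heps1 hV).min (monotone_Q2 hTp hp0 hp1 heps0 heps1 hV))

end

theorem stmt1_general (Tu Tu' Tp : ℕ) (hTu : 0 < Tu) (hTp : 0 < Tp)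
    (Cu Cp om p eps : ℝ)
    (hp0 : 0 < p) (hp1 : p ≤ 1) (heps0 : 0 < eps) (heps1 : eps ≤ 1) :
    ∀ k : ℕ, ∀ s1 s2 : ℕ, s1 ≤ s2 →
      (Tbell Tu Tu' Tp Cu Cp om p eps)^[k] (fun _ => (0 : ℝ)) s1 ≤
      (Tbell Tu Tu' Tp Cu Cp om p eps)^[k] (fun _ => (0 : ℝ)) s2 := by
  have hiterate : ∀ k, Monotone ((Tbell Tu Tu' Tp Cu Cp om p eps)^[k] fun _ => (0 : ℝ)) := by
    intro k
    induction k with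
    | zero => exact monotone_const
    | succ k ih =>
      rw [Function.iterate_succ_apply']
      exact monotone_Tbell hTu hTp hp0.le hp1 heps0.le heps1 ih
  exact fun k _ _ hs => hiterate k hs

theorem stmt1 (Tu Tu' Tp : ℕ) (hTu : 0 < Tu) (hTu' : 0 < Tu') (hTp : 0 < Tp)
    (Cu Cp om p eps : ℝ) (hCu : 0 ≤ Cu) (hCp : 0 ≤ Cp) (hom : 0 ≤ om)
    (hp0 : 0 < p) (hp1 : p ≤ 1) (heps0 : 0 < eps) (heps1 : eps ≤ 1) :
    ∀ k : ℕ, ∀ s1 s2 : ℕ, s1 ≤ s2 →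
      (Tbell Tu Tu' Tp Cu Cp om p eps)^[k] (fun _ => (0 : ℝ)) s1 ≤
      (Tbell Tu Tu' Tp Cu Cp om p eps)^[k] (fun _ => (0 : ℝ)) s2 :=
  stmt1_general Tu Tu' Tp hTu hTp Cu Cp om p eps hp0 hp1 heps0 heps1
end

section
/- If V : ℕ → ℝ is concave, then for each action the state–action value function is concave in the state: for all s1 ≤ s2 and all w ∈ ℕ, Qa(V,s1+w) − Qa(V,s1) ≥ Qa(V,s2+w) − Qa(V,s2) for a ∈ {0,1,2}; consequently the Bellman image TV (a pointwise minimum of three concave functions) is concave. -/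
lemma concave_of_step (g : ℕ → ℝ)
    (hstep : ∀ s : ℕ, g (s + 1) - g s ≥ g (s + 2) - g (s + 1)) :
    ∀ s1 s2 w : ℕ, s1 ≤ s2 → g (s1 + w) - g s1 ≥ g (s2 + w) - g s2 := by
  have hD : Antitone (fun s => g (s + 1) - g s) := by
    apply antitone_nat_of_succ_le
    intro n
    linarith [hstep n]
  intro s1 s2 w h
  induction w with
  | zero => simp
  | succ w ih =>
    have h1 : g (s1 + w + 1) - g (s1 + w) ≥ g (s2 + w + 1) - g (s2 + w) :=
      hD (by omega : s1 + w ≤ s2 + w)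
    have e1 : s1 + (w + 1) = s1 + w + 1 := by omega
    have e2 : s2 + (w + 1) = s2 + w + 1 := by omega
    rw [e1, e2]
    linarith

theorem stmt2 (Tu Tu' Tp : ℕ) (hTu : 0 < Tu) (hTu' : 0 < Tu') (hTp : 0 < Tp)
    (Cu Cp om p eps : ℝ) (hCu : 0 ≤ Cu) (hCp : 0 ≤ Cp) (hom : 0 ≤ om)
    (hp0 : 0 < p) (hp1 : p ≤ 1) (heps0 : 0 < eps) (heps1 : eps ≤ 1)
    (V : ℕ → ℝ)
    (hV : ∀ s1 s2 w : ℕ, s1 ≤ s2 → V (s1 + w) - V s1 ≥ V (s2 + w) - V s2) :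
    (∀ s1 s2 w : ℕ, s1 ≤ s2 →
      Q0 eps V (s1 + w) - Q0 eps V s1 ≥ Q0 eps V (s2 + w) - Q0 eps V s2) ∧
    (∀ s1 s2 w : ℕ, s1 ≤ s2 →
      Q1 Tu Cu om p eps V (s1 + w) - Q1 Tu Cu om p eps V s1 ≥
      Q1 Tu Cu om p eps V (s2 + w) - Q1 Tu Cu om p eps V s2) ∧
    (∀ s1 s2 w : ℕ, s1 ≤ s2 →
      Q2 Tu' Tp Cu Cp om p eps V (s1 + w) - Q2 Tu' Tp Cu Cp om p eps V s1 ≥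
      Q2 Tu' Tp Cu Cp om p eps V (s2 + w) - Q2 Tu' Tp Cu Cp om p eps V s2) ∧
    (∀ s1 s2 w : ℕ, s1 ≤ s2 →
      Tbell Tu Tu' Tp Cu Cp om p eps V (s1 + w) - Tbell Tu Tu' Tp Cu Cp om p eps V s1 ≥
      Tbell Tu Tu' Tp Cu Cp om p eps V (s2 + w) - Tbell Tu Tu' Tp Cu Cp om p eps V s2) := by
  have hTu1 : (1:ℝ) ≤ (Tu:ℝ) := by exact_mod_cast hTu
  have hTpTu : (1:ℝ) ≤ (Tp:ℝ) + (Tu':ℝ) := by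
    have : (1:ℝ) ≤ (Tp:ℝ) := by exact_mod_cast hTp
    have : (0:ℝ) ≤ (Tu':ℝ) := by positivity
    linarith [show (1:ℝ) ≤ (Tp:ℝ) from by exact_mod_cast hTp]
  have hQ0 : ∀ s1 s2 w : ℕ, s1 ≤ s2 →
      Q0 eps V (s1 + w) - Q0 eps V s1 ≥ Q0 eps V (s2 + w) - Q0 eps V s2 := by
    intro s1 s2 w h
    have h1 := hV s1 s2 w h
    have h2 : V (s1 + w + 1) - V (s1 + 1) ≥ V (s2 + w + 1) - V (s2 + 1) := by
      have := hV (s1 + 1) (s2 + 1) w (by omega)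
      have e1 : s1 + 1 + w = s1 + w + 1 := by omega
      have e2 : s2 + 1 + w = s2 + w + 1 := by omega
      rwa [e1, e2] at this
    have hA : (1 - eps) * (V (s2 + w) - V s2) ≤ (1 - eps) * (V (s1 + w) - V s1) :=
      mul_le_mul_of_nonneg_left h1 (by linarith)
    have hB : eps * (V (s2 + w + 1) - V (s2 + 1)) ≤ eps * (V (s1 + w + 1) - V (s1 + 1)) :=
      mul_le_mul_of_nonneg_left h2 (by linarith)
    simp only [Q0]
    push_cast
    ring_nf at hA hB ⊢
    linarith
  have hQ1 : ∀ s1 s2 w : ℕ, s1 ≤ s2 →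
      Q1 Tu Cu om p eps V (s1 + w) - Q1 Tu Cu om p eps V s1 ≥
      Q1 Tu Cu om p eps V (s2 + w) - Q1 Tu Cu om p eps V s2 := by
    intro s1 s2 w h
    have h1 := hV s1 s2 w h
    have h2 : V (s1 + w + Tu) - V (s1 + Tu) ≥ V (s2 + w + Tu) - V (s2 + Tu) := by
      have := hV (s1 + Tu) (s2 + Tu) w (by omega)
      have e1 : s1 + Tu + w = s1 + w + Tu := by omega
      have e2 : s2 + Tu + w = s2 + w + Tu := by omega
      rwa [e1, e2] at this
    have hdiv : eps / (Tu:ℝ) ≤ 1 := by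
      rw [div_le_one (by linarith)]
      linarith
    have hdiv0 : 0 ≤ eps / (Tu:ℝ) := by positivity
    have hpow : p ^ Tu ≤ 1 := pow_le_one₀ (le_of_lt hp0) hp1
    have hA : (1 - eps / (Tu:ℝ)) * (V (s2 + w) - V s2) ≤
        (1 - eps / (Tu:ℝ)) * (V (s1 + w) - V s1) :=
      mul_le_mul_of_nonneg_left h1 (by linarith)
    have hB : (eps / (Tu:ℝ)) * (1 - p ^ Tu) * (V (s2 + w + Tu) - V (s2 + Tu)) ≤
        (eps / (Tu:ℝ)) * (1 - p ^ Tu) * (V (s1 + w + Tu) - V (s1 + Tu)) :=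
      mul_le_mul_of_nonneg_left h2 (by nlinarith)
    simp only [Q1]
    push_cast
    ring_nf at hA hB ⊢
    linarith
  have hQ2 : ∀ s1 s2 w : ℕ, s1 ≤ s2 →
      Q2 Tu' Tp Cu Cp om p eps V (s1 + w) - Q2 Tu' Tp Cu Cp om p eps V s1 ≥
      Q2 Tu' Tp Cu Cp om p eps V (s2 + w) - Q2 Tu' Tp Cu Cp om p eps V s2 := by
    intro s1 s2 w h
    have h1 := hV s1 s2 w h
    have h2 : V (s1 + w + (Tp + Tu')) - V (s1 + (Tp + Tu')) ≥
        V (s2 + w + (Tp + Tu')) - V (s2 + (Tp + Tu')) := by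
      have := hV (s1 + (Tp + Tu')) (s2 + (Tp + Tu')) w (by omega)
      have e1 : s1 + (Tp + Tu') + w = s1 + w + (Tp + Tu') := by omega
      have e2 : s2 + (Tp + Tu') + w = s2 + w + (Tp + Tu') := by omega
      rwa [e1, e2] at this
    have hdiv : eps / ((Tp:ℝ) + (Tu':ℝ)) ≤ 1 := by
      rw [div_le_one (by linarith)]
      linarith
    have hdiv0 : 0 ≤ eps / ((Tp:ℝ) + (Tu':ℝ)) := by positivity
    have hpow : p ^ Tu' ≤ 1 := pow_le_one₀ (le_of_lt hp0) hp1
    have hA : (1 - eps / ((Tp:ℝ) + (Tu':ℝ))) * (V (s2 + w) - V s2) ≤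
        (1 - eps / ((Tp:ℝ) + (Tu':ℝ))) * (V (s1 + w) - V s1) :=
      mul_le_mul_of_nonneg_left h1 (by linarith)
    have hB : (eps / ((Tp:ℝ) + (Tu':ℝ))) * (1 - p ^ Tu') *
          (V (s2 + w + (Tp + Tu')) - V (s2 + (Tp + Tu'))) ≤
        (eps / ((Tp:ℝ) + (Tu':ℝ))) * (1 - p ^ Tu') *
          (V (s1 + w + (Tp + Tu')) - V (s1 + (Tp + Tu'))) :=
      mul_le_mul_of_nonneg_left h2 (by nlinarith)
    simp only [Q2]
    push_cast
    ring_nf at hA hB ⊢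
    linarith
  refine ⟨hQ0, hQ1, hQ2, ?_⟩
  apply concave_of_step
  intro s
  have t0 : ∀ t, Tbell Tu Tu' Tp Cu Cp om p eps V t ≤ Q0 eps V t :=
    fun t => min_le_left _ _
  have t1 : ∀ t, Tbell Tu Tu' Tp Cu Cp om p eps V t ≤ Q1 Tu Cu om p eps V t :=
    fun t => le_trans (min_le_right _ _) (min_le_left _ _)
  have t2 : ∀ t, Tbell Tu Tu' Tp Cu Cp om p eps V t ≤ Q2 Tu' Tp Cu Cp om p eps V t :=
    fun t => le_trans (min_le_right _ _) (min_le_right _ _)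
  have key0 : Q0 eps V (s + 1) - Q0 eps V s ≥ Q0 eps V (s + 2) - Q0 eps V (s + 1) :=
    hQ0 s (s + 1) 1 (Nat.le_succ s)
  have key1 : Q1 Tu Cu om p eps V (s + 1) - Q1 Tu Cu om p eps V s ≥
      Q1 Tu Cu om p eps V (s + 2) - Q1 Tu Cu om p eps V (s + 1) :=
    hQ1 s (s + 1) 1 (Nat.le_succ s)
  have key2 : Q2 Tu' Tp Cu Cp om p eps V (s + 1) - Q2 Tu' Tp Cu Cp om p eps V s ≥
      Q2 Tu' Tp Cu Cp om p eps V (s + 2) - Q2 Tu' Tp Cu Cp om p eps V (s + 1) :=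
    hQ2 s (s + 1) 1 (Nat.le_succ s)
  have hcases : Tbell Tu Tu' Tp Cu Cp om p eps V (s + 1) = Q0 eps V (s + 1) ∨
      Tbell Tu Tu' Tp Cu Cp om p eps V (s + 1) = Q1 Tu Cu om p eps V (s + 1) ∨
      Tbell Tu Tu' Tp Cu Cp om p eps V (s + 1) = Q2 Tu' Tp Cu Cp om p eps V (s + 1) := by
    unfold Tbell
    rcases min_cases (Q0 eps V (s + 1))
        (min (Q1 Tu Cu om p eps V (s + 1)) (Q2 Tu' Tp Cu Cp om p eps V (s + 1))) with
      ⟨h, _⟩ | ⟨h, _⟩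
    · exact Or.inl h
    · rw [h]
      rcases min_cases (Q1 Tu Cu om p eps V (s + 1)) (Q2 Tu' Tp Cu Cp om p eps V (s + 1)) with
        ⟨h', _⟩ | ⟨h', _⟩
      · exact Or.inr (Or.inl h')
      · exact Or.inr (Or.inr h')
  rcases hcases with h | h | h
  · linarith [t0 s, t0 (s + 2)]
  · linarith [t1 s, t1 (s + 2)]
  · linarith [t2 s, t2 (s + 2)]
end

section
/- Define the value-iteration sequence by V_0(s) = 0 for all s ∈ ℕ and V_{k+1} = T V_k. Then for every k ∈ ℕ the iterate V_k is concave, i.e., V_k(s1+w) − V_k(s1) ≥ V_k(s2+w) − V_k(s2) for all s1 ≤ s2 and all w ∈ ℕ. -/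
def Conc (f : ℕ → ℝ) : Prop :=
  ∀ s1 s2 w : ℕ, s1 ≤ s2 → f (s2 + w) - f s2 ≤ f (s1 + w) - f s1

lemma conc_of_step (f : ℕ → ℝ)
    (h : ∀ s : ℕ, f (s + 1 + 1) - f (s + 1) ≤ f (s + 1) - f s) : Conc f := by
  have d : ∀ s t : ℕ, s ≤ t → f (t + 1) - f t ≤ f (s + 1) - f s := by
    intro s t hst
    induction t, hst using Nat.le_induction with
    | base => exact le_refl _
    | succ n hn ih => exact le_trans (h n) ih
  intro s1 s2 w h12
  induction w with
  | zero => simp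
  | succ w ih =>
    have hd := d (s1 + w) (s2 + w) (by omega)
    have e1 : s1 + (w + 1) = (s1 + w) + 1 := by omega
    have e2 : s2 + (w + 1) = (s2 + w) + 1 := by omega
    rw [e1, e2]
    linarith

lemma step_of_conc (f : ℕ → ℝ) (hf : Conc f) (s : ℕ) :
    f (s + 1 + 1) - f (s + 1) ≤ f (s + 1) - f s := by
  have := hf s (s + 1) 1 (Nat.le_succ s)
  linarith

lemma conc_min (f g : ℕ → ℝ) (hf : Conc f) (hg : Conc g) :
    Conc (fun s => min (f s) (g s)) := by
  apply conc_of_step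
  intro s
  rcases le_total (f (s + 1)) (g (s + 1)) with h1 | h1
  · have hm : min (f (s + 1)) (g (s + 1)) = f (s + 1) := min_eq_left h1
    have a : min (f (s + 1 + 1)) (g (s + 1 + 1)) ≤ f (s + 1 + 1) := min_le_left _ _
    have b : min (f s) (g s) ≤ f s := min_le_left _ _
    have step := step_of_conc f hf s
    rw [hm]; linarith
  · have hm : min (f (s + 1)) (g (s + 1)) = g (s + 1) := min_eq_right h1
    have a : min (f (s + 1 + 1)) (g (s + 1 + 1)) ≤ g (s + 1 + 1) := min_le_right _ _
    have b : min (f s) (g s) ≤ g s := min_le_right _ _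
    have step := step_of_conc g hg s
    rw [hm]; linarith

lemma conc_Q0 (eps : ℝ) (he0 : 0 ≤ eps) (he1 : eps ≤ 1) (V : ℕ → ℝ) (hV : Conc V) :
    Conc (Q0 eps V) := by
  intro s1 s2 w h
  unfold Q0
  have h1 := hV s1 s2 w h
  have h2 := hV (s1 + 1) (s2 + 1) w (by omega)
  have e1 : s1 + w + 1 = (s1 + 1) + w := by omega
  have e2 : s2 + w + 1 = (s2 + 1) + w := by omega
  rw [e1, e2]
  have m1 := mul_le_mul_of_nonneg_left h1 (by linarith : (0:ℝ) ≤ 1 - eps)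
  have m2 := mul_le_mul_of_nonneg_left h2 he0
  push_cast
  nlinarith [m1, m2]

lemma conc_Q1 (Tu : ℕ) (hTu : 0 < Tu) (Cu om p eps : ℝ)
    (hp0 : 0 < p) (hp1 : p ≤ 1) (he0 : 0 < eps) (he1 : eps ≤ 1)
    (V : ℕ → ℝ) (hV : Conc V) : Conc (Q1 Tu Cu om p eps V) := by
  intro s1 s2 w h
  unfold Q1
  have hT : (1:ℝ) ≤ (Tu:ℝ) := by exact_mod_cast hTu
  have ha : (0:ℝ) ≤ 1 - eps / (Tu:ℝ) := by
    have : eps / (Tu:ℝ) ≤ eps / 1 := by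
      apply div_le_div_of_nonneg_left he0.le one_pos hT
    simp at this; linarith
  have hpT : p ^ Tu ≤ 1 := pow_le_one₀ hp0.le hp1
  have hc : (0:ℝ) ≤ (eps / (Tu:ℝ)) * (1 - p ^ Tu) := by
    apply mul_nonneg (div_nonneg he0.le (by linarith)) (by linarith)
  have h1 := hV s1 s2 w h
  have h2 := hV (s1 + Tu) (s2 + Tu) w (by omega)
  have e1 : s1 + w + Tu = (s1 + Tu) + w := by omega
  have e2 : s2 + w + Tu = (s2 + Tu) + w := by omega
  rw [e1, e2]
  have m1 := mul_le_mul_of_nonneg_left h1 ha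
  have m2 := mul_le_mul_of_nonneg_left h2 hc
  push_cast
  nlinarith [m1, m2]

lemma conc_Q2 (Tu' Tp : ℕ) (hTu' : 0 < Tu') (hTp : 0 < Tp) (Cu Cp om p eps : ℝ)
    (hp0 : 0 < p) (hp1 : p ≤ 1) (he0 : 0 < eps) (he1 : eps ≤ 1)
    (V : ℕ → ℝ) (hV : Conc V) : Conc (Q2 Tu' Tp Cu Cp om p eps V) := by
  intro s1 s2 w h
  unfold Q2
  have hT : (1:ℝ) ≤ (Tp:ℝ) + (Tu':ℝ) := by
    have h1 : (1:ℝ) ≤ (Tp:ℝ) := by exact_mod_cast hTp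
    have h2 : (0:ℝ) ≤ (Tu':ℝ) := by positivity
    linarith
  have ha : (0:ℝ) ≤ 1 - eps / ((Tp:ℝ) + (Tu':ℝ)) := by
    have : eps / ((Tp:ℝ) + (Tu':ℝ)) ≤ eps / 1 := by
      apply div_le_div_of_nonneg_left he0.le one_pos hT
    simp at this; linarith
  have hpT : p ^ Tu' ≤ 1 := pow_le_one₀ hp0.le hp1
  have hc : (0:ℝ) ≤ (eps / ((Tp:ℝ) + (Tu':ℝ))) * (1 - p ^ Tu') := by
    apply mul_nonneg (div_nonneg he0.le (by linarith)) (by linarith)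
  have h1 := hV s1 s2 w h
  have h2 := hV (s1 + (Tp + Tu')) (s2 + (Tp + Tu')) w (by omega)
  have e1 : s1 + w + (Tp + Tu') = (s1 + (Tp + Tu')) + w := by omega
  have e2 : s2 + w + (Tp + Tu') = (s2 + (Tp + Tu')) + w := by omega
  rw [e1, e2]
  have m1 := mul_le_mul_of_nonneg_left h1 ha
  have m2 := mul_le_mul_of_nonneg_left h2 hc
  push_cast
  nlinarith [m1, m2]

theorem stmt3 (Tu Tu' Tp : ℕ) (hTu : 0 < Tu) (hTu' : 0 < Tu') (hTp : 0 < Tp)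
    (Cu Cp om p eps : ℝ) (hCu : 0 ≤ Cu) (hCp : 0 ≤ Cp) (hom : 0 ≤ om)
    (hp0 : 0 < p) (hp1 : p ≤ 1) (heps0 : 0 < eps) (heps1 : eps ≤ 1) :
    ∀ k : ℕ, ∀ s1 s2 w : ℕ, s1 ≤ s2 →
      (Tbell Tu Tu' Tp Cu Cp om p eps)^[k] (fun _ => (0 : ℝ)) (s1 + w) -
      (Tbell Tu Tu' Tp Cu Cp om p eps)^[k] (fun _ => (0 : ℝ)) s1 ≥
      (Tbell Tu Tu' Tp Cu Cp om p eps)^[k] (fun _ => (0 : ℝ)) (s2 + w) -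
      (Tbell Tu Tu' Tp Cu Cp om p eps)^[k] (fun _ => (0 : ℝ)) s2 := by
  have key : ∀ k : ℕ, Conc ((Tbell Tu Tu' Tp Cu Cp om p eps)^[k] (fun _ => (0 : ℝ))) := by
    intro k
    induction k with
    | zero => intro s1 s2 w h; simp
    | succ n ih =>
      rw [Function.iterate_succ_apply']
      set V := (Tbell Tu Tu' Tp Cu Cp om p eps)^[n] (fun _ => (0 : ℝ)) with hVdef
      have hq0 := conc_Q0 eps heps0.le heps1 V ih
      have hq1 := conc_Q1 Tu hTu Cu om p eps hp0 hp1 heps0 heps1 V ih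
      have hq2 := conc_Q2 Tu' Tp hTu' hTp Cu Cp om p eps hp0 hp1 heps0 heps1 V ih
      have h12 := conc_min _ _ hq1 hq2
      have := conc_min _ _ hq0 h12
      exact this
  intro k s1 s2 w h
  exact key k s1 s2 w h
end

section
/- Assume T_u/p^{T_u} ≤ (T_p+T_u')/p^{T_u'} and set c = T_u/(ε·p^{T_u}). If V : ℕ → ℝ has slope at least c, then each of Q0(V,·), Q1(V,·), Q2(V,·) has slope at least c, i.e., Qa(V,s2) − Qa(V,s1) ≥ c·(s2 − s1) for all s1 ≤ s2 and a ∈ {0,1,2}; consequently the Bellman image TV has slope at least c. -/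
theorem stmt4 (Tu Tu' Tp : ℕ) (hTu : 0 < Tu) (hTu' : 0 < Tu') (hTp : 0 < Tp)
    (Cu Cp om p eps : ℝ) (hCu : 0 ≤ Cu) (hCp : 0 ≤ Cp) (hom : 0 ≤ om)
    (hp0 : 0 < p) (hp1 : p ≤ 1) (heps0 : 0 < eps) (heps1 : eps ≤ 1)
    (hcase : (Tu : ℝ) / p ^ Tu ≤ ((Tp : ℝ) + (Tu' : ℝ)) / p ^ Tu')
    (V : ℕ → ℝ)
    (hV : ∀ s1 s2 : ℕ, s1 ≤ s2 → V s2 - V s1 ≥ ((Tu : ℝ) / (eps * p ^ Tu)) * ((s2 : ℝ) - (s1 : ℝ))) :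
    (∀ s1 s2 : ℕ, s1 ≤ s2 →
      Q0 eps V s2 - Q0 eps V s1 ≥ ((Tu : ℝ) / (eps * p ^ Tu)) * ((s2 : ℝ) - (s1 : ℝ))) ∧
    (∀ s1 s2 : ℕ, s1 ≤ s2 →
      Q1 Tu Cu om p eps V s2 - Q1 Tu Cu om p eps V s1 ≥ ((Tu : ℝ) / (eps * p ^ Tu)) * ((s2 : ℝ) - (s1 : ℝ))) ∧
    (∀ s1 s2 : ℕ, s1 ≤ s2 →
      Q2 Tu' Tp Cu Cp om p eps V s2 - Q2 Tu' Tp Cu Cp om p eps V s1 ≥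
        ((Tu : ℝ) / (eps * p ^ Tu)) * ((s2 : ℝ) - (s1 : ℝ))) ∧
    (∀ s1 s2 : ℕ, s1 ≤ s2 →
      Tbell Tu Tu' Tp Cu Cp om p eps V s2 - Tbell Tu Tu' Tp Cu Cp om p eps V s1 ≥
        ((Tu : ℝ) / (eps * p ^ Tu)) * ((s2 : ℝ) - (s1 : ℝ))) := by
  have hpTu : (0:ℝ) < p ^ Tu := pow_pos hp0 Tu
  have hpTu' : (0:ℝ) < p ^ Tu' := pow_pos hp0 Tu'
  have hTuR : (0:ℝ) < (Tu:ℝ) := by exact_mod_cast hTu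
  have hTuR1 : (1:ℝ) ≤ (Tu:ℝ) := by exact_mod_cast hTu
  have hKR : (0:ℝ) < (Tp:ℝ) + (Tu':ℝ) := by
    have h1 : (0:ℝ) < (Tp:ℝ) := by exact_mod_cast hTp
    have h2 : (0:ℝ) < (Tu':ℝ) := by exact_mod_cast hTu'
    linarith
  have hKR1 : (1:ℝ) ≤ (Tp:ℝ) + (Tu':ℝ) := by
    have h1 : (1:ℝ) ≤ (Tp:ℝ) := by exact_mod_cast hTp
    have h2 : (0:ℝ) < (Tu':ℝ) := by exact_mod_cast hTu'
    linarith
  set c : ℝ := (Tu:ℝ) / (eps * p ^ Tu) with hc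
  have hc0 : 0 ≤ c := by positivity
  have h1eq : (eps / (Tu:ℝ)) * p ^ Tu * c = 1 := by
    rw [hc]; field_simp
  have h2le : (eps / ((Tp:ℝ) + (Tu':ℝ))) * p ^ Tu' * c ≤ 1 := by
    have heq : (eps / ((Tp:ℝ) + (Tu':ℝ))) * p ^ Tu' * c
        = ((Tu:ℝ) * p ^ Tu') / (((Tp:ℝ) + (Tu':ℝ)) * p ^ Tu) := by
      rw [hc]; field_simp
    rw [heq, div_le_one (by positivity)]
    rw [div_le_div_iff₀ hpTu hpTu'] at hcase
    linarith
  have hco1 : 0 ≤ 1 - eps / (Tu:ℝ) := by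
    have : eps / (Tu:ℝ) ≤ 1 := by
      rw [div_le_one hTuR]; linarith
    linarith
  have hco2 : 0 ≤ (eps / (Tu:ℝ)) * (1 - p ^ Tu) := by
    have hle : p ^ Tu ≤ 1 := pow_le_one₀ hp0.le hp1
    exact mul_nonneg (by positivity) (by linarith)
  have hco3 : 0 ≤ 1 - eps / ((Tp:ℝ) + (Tu':ℝ)) := by
    have : eps / ((Tp:ℝ) + (Tu':ℝ)) ≤ 1 := by
      rw [div_le_one hKR]; linarith
    linarith
  have hco4 : 0 ≤ (eps / ((Tp:ℝ) + (Tu':ℝ))) * (1 - p ^ Tu') := by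
    have hle : p ^ Tu' ≤ 1 := pow_le_one₀ hp0.le hp1
    exact mul_nonneg (by positivity) (by linarith)
  have hQ0 : ∀ s1 s2 : ℕ, s1 ≤ s2 →
      Q0 eps V s2 - Q0 eps V s1 ≥ c * ((s2:ℝ) - (s1:ℝ)) := by
    intro s1 s2 h
    have d0 : (0:ℝ) ≤ (s2:ℝ) - (s1:ℝ) := by
      have : (s1:ℝ) ≤ (s2:ℝ) := by exact_mod_cast h
      linarith
    have hv1 := hV s1 s2 h
    have hv2 := hV (s1+1) (s2+1) (by omega)
    have e2 : ((s2+1:ℕ):ℝ) - ((s1+1:ℕ):ℝ) = (s2:ℝ) - (s1:ℝ) := by push_cast; ring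
    rw [e2] at hv2
    have expand : Q0 eps V s2 - Q0 eps V s1
        = ((s2:ℝ) - (s1:ℝ)) + (1 - eps) * (V s2 - V s1) + eps * (V (s2+1) - V (s1+1)) := by
      simp only [Q0]; push_cast; ring
    rw [expand]
    have m1 := mul_le_mul_of_nonneg_left hv1 (by linarith : (0:ℝ) ≤ 1 - eps)
    have m2 := mul_le_mul_of_nonneg_left hv2 heps0.le
    linarith [mul_nonneg hc0 d0]
  have hQ1 : ∀ s1 s2 : ℕ, s1 ≤ s2 →
      Q1 Tu Cu om p eps V s2 - Q1 Tu Cu om p eps V s1 ≥ c * ((s2:ℝ) - (s1:ℝ)) := by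
    intro s1 s2 h
    have d0 : (0:ℝ) ≤ (s2:ℝ) - (s1:ℝ) := by
      have : (s1:ℝ) ≤ (s2:ℝ) := by exact_mod_cast h
      linarith
    have hv1 := hV s1 s2 h
    have hv2 := hV (s1+Tu) (s2+Tu) (by omega)
    have e2 : ((s2+Tu:ℕ):ℝ) - ((s1+Tu:ℕ):ℝ) = (s2:ℝ) - (s1:ℝ) := by push_cast; ring
    rw [e2] at hv2
    have h1d : (eps / (Tu:ℝ)) * p ^ Tu * c * ((s2:ℝ) - (s1:ℝ)) = (s2:ℝ) - (s1:ℝ) := by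
      rw [h1eq]; ring
    have expand : Q1 Tu Cu om p eps V s2 - Q1 Tu Cu om p eps V s1
        = ((s2:ℝ) - (s1:ℝ)) + (1 - eps / (Tu:ℝ)) * (V s2 - V s1)
          + (eps / (Tu:ℝ)) * (1 - p ^ Tu) * (V (s2+Tu) - V (s1+Tu)) := by
      simp only [Q1]; push_cast; ring
    rw [expand]
    have m1 := mul_le_mul_of_nonneg_left hv1 hco1
    have m2 := mul_le_mul_of_nonneg_left hv2 hco2
    linarith
  have hQ2 : ∀ s1 s2 : ℕ, s1 ≤ s2 →
      Q2 Tu' Tp Cu Cp om p eps V s2 - Q2 Tu' Tp Cu Cp om p eps V s1 ≥ c * ((s2:ℝ) - (s1:ℝ)) := by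
    intro s1 s2 h
    have d0 : (0:ℝ) ≤ (s2:ℝ) - (s1:ℝ) := by
      have : (s1:ℝ) ≤ (s2:ℝ) := by exact_mod_cast h
      linarith
    have hv1 := hV s1 s2 h
    have hv2 := hV (s1+(Tp+Tu')) (s2+(Tp+Tu')) (by omega)
    have e2 : ((s2+(Tp+Tu'):ℕ):ℝ) - ((s1+(Tp+Tu'):ℕ):ℝ) = (s2:ℝ) - (s1:ℝ) := by push_cast; ring
    rw [e2] at hv2
    have h2d : (eps / ((Tp:ℝ)+(Tu':ℝ))) * p ^ Tu' * c * ((s2:ℝ) - (s1:ℝ)) ≤ (s2:ℝ) - (s1:ℝ) := by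
      have := mul_le_mul_of_nonneg_right h2le d0
      linarith
    have expand : Q2 Tu' Tp Cu Cp om p eps V s2 - Q2 Tu' Tp Cu Cp om p eps V s1
        = ((s2:ℝ) - (s1:ℝ)) + (1 - eps / ((Tp:ℝ) + (Tu':ℝ))) * (V s2 - V s1)
          + (eps / ((Tp:ℝ) + (Tu':ℝ))) * (1 - p ^ Tu') * (V (s2+(Tp+Tu')) - V (s1+(Tp+Tu'))) := by
      simp only [Q2]; push_cast; ring
    rw [expand]
    have m1 := mul_le_mul_of_nonneg_left hv1 hco3
    have m2 := mul_le_mul_of_nonneg_left hv2 hco4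
    linarith
  refine ⟨hQ0, hQ1, hQ2, ?_⟩
  intro s1 s2 h
  have h0 := hQ0 s1 s2 h
  have h1' := hQ1 s1 s2 h
  have h2' := hQ2 s1 s2 h
  simp only [Tbell]
  have hm : min (Q0 eps V s1) (min (Q1 Tu Cu om p eps V s1) (Q2 Tu' Tp Cu Cp om p eps V s1))
      + c * ((s2:ℝ) - (s1:ℝ))
      ≤ min (Q0 eps V s2) (min (Q1 Tu Cu om p eps V s2) (Q2 Tu' Tp Cu Cp om p eps V s2)) := by
    refine le_min ?_ (le_min ?_ ?_)
    · have := min_le_left (Q0 eps V s1) (min (Q1 Tu Cu om p eps V s1) (Q2 Tu' Tp Cu Cp om p eps V s1))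
      linarith
    · have h3 := min_le_right (Q0 eps V s1) (min (Q1 Tu Cu om p eps V s1) (Q2 Tu' Tp Cu Cp om p eps V s1))
      have h4 := min_le_left (Q1 Tu Cu om p eps V s1) (Q2 Tu' Tp Cu Cp om p eps V s1)
      linarith
    · have h3 := min_le_right (Q0 eps V s1) (min (Q1 Tu Cu om p eps V s1) (Q2 Tu' Tp Cu Cp om p eps V s1))
      have h4 := min_le_right (Q1 Tu Cu om p eps V s1) (Q2 Tu' Tp Cu Cp om p eps V s1)
      linarith
  linarith
end

section
/- Assume T_u/p^{T_u} ≤ (T_p+T_u')/p^{T_u'} and set c = T_u/(ε·p^{T_u}). Define V_0(s) = c·s for all s ∈ ℕ and V_{k+1} = T V_k. Then for every k ∈ ℕ, V_k(s2) − V_k(s1) ≥ c·(s2 − s1) for all s1 ≤ s2. -/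
theorem stmt5 (Tu Tu' Tp : ℕ) (hTu : 0 < Tu) (hTu' : 0 < Tu') (hTp : 0 < Tp)
    (Cu Cp om p eps : ℝ) (hCu : 0 ≤ Cu) (hCp : 0 ≤ Cp) (hom : 0 ≤ om)
    (hp0 : 0 < p) (hp1 : p ≤ 1) (heps0 : 0 < eps) (heps1 : eps ≤ 1)
    (hcase : (Tu : ℝ) / p ^ Tu ≤ ((Tp : ℝ) + (Tu' : ℝ)) / p ^ Tu') :
    ∀ k : ℕ, ∀ s1 s2 : ℕ, s1 ≤ s2 →
      (Tbell Tu Tu' Tp Cu Cp om p eps)^[k] (fun s => ((Tu : ℝ) / (eps * p ^ Tu)) * (s : ℝ)) s2 -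
      (Tbell Tu Tu' Tp Cu Cp om p eps)^[k] (fun s => ((Tu : ℝ) / (eps * p ^ Tu)) * (s : ℝ)) s1 ≥
      ((Tu : ℝ) / (eps * p ^ Tu)) * ((s2 : ℝ) - (s1 : ℝ)) := by
  set c : ℝ := (Tu : ℝ) / (eps * p ^ Tu) with hc
  have hTuR : (0 : ℝ) < Tu := by exact_mod_cast hTu
  have hTu'R : (0 : ℝ) < Tu' := by exact_mod_cast hTu'
  have hTpR : (0 : ℝ) < Tp := by exact_mod_cast hTp
  have hq0 : (0 : ℝ) < p ^ Tu := pow_pos hp0 _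
  have hq1 : p ^ Tu ≤ 1 := pow_le_one₀ hp0.le hp1
  have hr0 : (0 : ℝ) < p ^ Tu' := pow_pos hp0 _
  have hr1 : p ^ Tu' ≤ 1 := pow_le_one₀ hp0.le hp1
  have hc0 : 0 < c := div_pos hTuR (mul_pos heps0 hq0)
  have hkey : c * (eps / Tu) * p ^ Tu = 1 := by
    rw [hc]; field_simp
  have hkey2 : c * (eps / ((Tp : ℝ) + Tu')) * p ^ Tu' ≤ 1 := by
    rw [div_le_div_iff₀ hq0 hr0] at hcase
    have heq : c * (eps / ((Tp : ℝ) + Tu')) * p ^ Tu'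
        = ((Tu : ℝ) * p ^ Tu') / (((Tp : ℝ) + Tu') * p ^ Tu) := by
      rw [hc]; field_simp
    rw [heq, div_le_one (by positivity)]
    linarith
  have step : ∀ V : ℕ → ℝ,
      (∀ s1 s2 : ℕ, s1 ≤ s2 → V s2 - V s1 ≥ c * ((s2 : ℝ) - s1)) →
      ∀ s1 s2 : ℕ, s1 ≤ s2 →
        Tbell Tu Tu' Tp Cu Cp om p eps V s2 - Tbell Tu Tu' Tp Cu Cp om p eps V s1
          ≥ c * ((s2 : ℝ) - s1) := by
    intro V hV s1 s2 h12
    have hd : (0 : ℝ) ≤ (s2 : ℝ) - s1 := by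
      have : (s1 : ℝ) ≤ s2 := by exact_mod_cast h12
      linarith
    set Δ : ℝ := (s2 : ℝ) - s1 with hΔ
    have d0 := hV s1 s2 h12
    have hQ0 : Q0 eps V s2 - Q0 eps V s1 ≥ c * Δ := by
      have d1 := hV (s1 + 1) (s2 + 1) (by omega)
      have hcast : ((s2 + 1 : ℕ) : ℝ) - ((s1 + 1 : ℕ) : ℝ) = Δ := by push_cast; ring
      rw [hcast] at d1
      have expand : Q0 eps V s2 - Q0 eps V s1
          = Δ + (1 - eps) * (V s2 - V s1) + eps * (V (s2 + 1) - V (s1 + 1)) := by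
        simp only [Q0]; ring
      rw [expand]
      have h1 : (1 - eps) * (V s2 - V s1) ≥ (1 - eps) * (c * Δ) :=
        mul_le_mul_of_nonneg_left d0 (by linarith)
      have h2 : eps * (V (s2 + 1) - V (s1 + 1)) ≥ eps * (c * Δ) :=
        mul_le_mul_of_nonneg_left d1 heps0.le
      have h3 : (1 - eps) * (c * Δ) + eps * (c * Δ) = c * Δ := by ring
      linarith
    have hQ1 : Q1 Tu Cu om p eps V s2 - Q1 Tu Cu om p eps V s1 ≥ c * Δ := by
      have d1 := hV (s1 + Tu) (s2 + Tu) (by omega)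
      have hcast : ((s2 + Tu : ℕ) : ℝ) - ((s1 + Tu : ℕ) : ℝ) = Δ := by push_cast; ring
      rw [hcast] at d1
      have ha1 : eps / (Tu : ℝ) ≤ 1 := by
        rw [div_le_one hTuR]
        calc eps ≤ 1 := heps1
          _ ≤ Tu := by exact_mod_cast hTu
      have ha0 : (0 : ℝ) ≤ eps / Tu := by positivity
      have expand : Q1 Tu Cu om p eps V s2 - Q1 Tu Cu om p eps V s1
          = Δ + (1 - eps / Tu) * (V s2 - V s1)
            + (eps / Tu) * (1 - p ^ Tu) * (V (s2 + Tu) - V (s1 + Tu)) := by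
        simp only [Q1]; ring
      rw [expand]
      have h1 : (1 - eps / Tu) * (V s2 - V s1) ≥ (1 - eps / Tu) * (c * Δ) :=
        mul_le_mul_of_nonneg_left d0 (by linarith)
      have h2 : (eps / Tu) * (1 - p ^ Tu) * (V (s2 + Tu) - V (s1 + Tu))
          ≥ (eps / Tu) * (1 - p ^ Tu) * (c * Δ) :=
        mul_le_mul_of_nonneg_left d1 (mul_nonneg ha0 (by linarith))
      have h3 : (1 - eps / Tu) * (c * Δ) + (eps / Tu) * (1 - p ^ Tu) * (c * Δ)
          = c * Δ - (c * (eps / Tu) * p ^ Tu) * Δ := by ring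
      rw [hkey] at h3
      linarith
    have hQ2 : Q2 Tu' Tp Cu Cp om p eps V s2 - Q2 Tu' Tp Cu Cp om p eps V s1 ≥ c * Δ := by
      have d1 := hV (s1 + (Tp + Tu')) (s2 + (Tp + Tu')) (by omega)
      have hcast : ((s2 + (Tp + Tu') : ℕ) : ℝ) - ((s1 + (Tp + Tu') : ℕ) : ℝ) = Δ := by
        push_cast; ring
      rw [hcast] at d1
      have hTT : (0 : ℝ) < (Tp : ℝ) + Tu' := by positivity
      have ha1 : eps / ((Tp : ℝ) + Tu') ≤ 1 := by
        rw [div_le_one hTT]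
        calc eps ≤ 1 := heps1
          _ ≤ (Tp : ℝ) + Tu' := by
            have h1 : (1 : ℝ) ≤ Tp := by exact_mod_cast hTp
            linarith
      have ha0 : (0 : ℝ) ≤ eps / ((Tp : ℝ) + Tu') := by positivity
      have expand : Q2 Tu' Tp Cu Cp om p eps V s2 - Q2 Tu' Tp Cu Cp om p eps V s1
          = Δ + (1 - eps / ((Tp : ℝ) + Tu')) * (V s2 - V s1)
            + (eps / ((Tp : ℝ) + Tu')) * (1 - p ^ Tu')
              * (V (s2 + (Tp + Tu')) - V (s1 + (Tp + Tu'))) := by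
        simp only [Q2]; ring
      rw [expand]
      have h1 : (1 - eps / ((Tp : ℝ) + Tu')) * (V s2 - V s1)
          ≥ (1 - eps / ((Tp : ℝ) + Tu')) * (c * Δ) :=
        mul_le_mul_of_nonneg_left d0 (by linarith)
      have h2 : (eps / ((Tp : ℝ) + Tu')) * (1 - p ^ Tu')
            * (V (s2 + (Tp + Tu')) - V (s1 + (Tp + Tu')))
          ≥ (eps / ((Tp : ℝ) + Tu')) * (1 - p ^ Tu') * (c * Δ) :=
        mul_le_mul_of_nonneg_left d1 (mul_nonneg ha0 (by linarith))
      have h3 : (1 - eps / ((Tp : ℝ) + Tu')) * (c * Δ)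
            + (eps / ((Tp : ℝ) + Tu')) * (1 - p ^ Tu') * (c * Δ)
          = c * Δ - (c * (eps / ((Tp : ℝ) + Tu')) * p ^ Tu') * Δ := by ring
      have h4 : (c * (eps / ((Tp : ℝ) + Tu')) * p ^ Tu') * Δ ≤ 1 * Δ :=
        mul_le_mul_of_nonneg_right hkey2 hd
      rw [one_mul] at h4
      linarith
    have hmin1 : Tbell Tu Tu' Tp Cu Cp om p eps V s1 ≤ Q0 eps V s1 := min_le_left _ _
    have hmin2 : Tbell Tu Tu' Tp Cu Cp om p eps V s1 ≤ Q1 Tu Cu om p eps V s1 :=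
      le_trans (min_le_right _ _) (min_le_left _ _)
    have hmin3 : Tbell Tu Tu' Tp Cu Cp om p eps V s1 ≤ Q2 Tu' Tp Cu Cp om p eps V s1 :=
      le_trans (min_le_right _ _) (min_le_right _ _)
    have hfin : Tbell Tu Tu' Tp Cu Cp om p eps V s1 + c * Δ
        ≤ Tbell Tu Tu' Tp Cu Cp om p eps V s2 := by
      refine le_min ?_ (le_min ?_ ?_) <;> linarith
    linarith
  intro k
  induction k with
  | zero =>
    intro s1 s2 h12
    simp only [Function.iterate_zero, id]
    have : (s1 : ℝ) ≤ s2 := by exact_mod_cast h12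
    rw [ge_iff_le]
    ring_nf
    linarith
  | succ n ih =>
    intro s1 s2 h12
    simp only [Function.iterate_succ_apply']
    exact step _ ih s1 s2 h12
end

section
/- Assume (T_p+T_u')/p^{T_u'} ≤ T_u/p^{T_u} and set c = (T_p+T_u')/(ε·p^{T_u'}). Define V_0(s) = c·s for all s ∈ ℕ and V_{k+1} = T V_k. Then for every k ∈ ℕ, V_k(s2) − V_k(s1) ≥ c·(s2 − s1) for all s1 ≤ s2. -/
theorem stmt6 (Tu Tu' Tp : ℕ) (hTu : 0 < Tu) (hTu' : 0 < Tu') (hTp : 0 < Tp)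
    (Cu Cp om p eps : ℝ) (hCu : 0 ≤ Cu) (hCp : 0 ≤ Cp) (hom : 0 ≤ om)
    (hp0 : 0 < p) (hp1 : p ≤ 1) (heps0 : 0 < eps) (heps1 : eps ≤ 1)
    (hcase : ((Tp : ℝ) + (Tu' : ℝ)) / p ^ Tu' ≤ (Tu : ℝ) / p ^ Tu) :
    ∀ k : ℕ, ∀ s1 s2 : ℕ, s1 ≤ s2 →
      (Tbell Tu Tu' Tp Cu Cp om p eps)^[k] (fun s => (((Tp : ℝ) + (Tu' : ℝ)) / (eps * p ^ Tu')) * (s : ℝ)) s2 -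
      (Tbell Tu Tu' Tp Cu Cp om p eps)^[k] (fun s => (((Tp : ℝ) + (Tu' : ℝ)) / (eps * p ^ Tu')) * (s : ℝ)) s1 ≥
      (((Tp : ℝ) + (Tu' : ℝ)) / (eps * p ^ Tu')) * ((s2 : ℝ) - (s1 : ℝ)) := by
  set c : ℝ := ((Tp : ℝ) + (Tu' : ℝ)) / (eps * p ^ Tu') with hc
  have hTuR : (0:ℝ) < (Tu : ℝ) := by exact_mod_cast hTu
  have hSR : (0:ℝ) < (Tp : ℝ) + (Tu' : ℝ) := by
    have h1 : (0:ℝ) < (Tp : ℝ) := by exact_mod_cast hTp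
    have h2 : (0:ℝ) < (Tu' : ℝ) := by exact_mod_cast hTu'
    linarith
  have hpTu : (0:ℝ) < p ^ Tu := pow_pos hp0 Tu
  have hpTu' : (0:ℝ) < p ^ Tu' := pow_pos hp0 Tu'
  have hpTu1 : p ^ Tu ≤ 1 := pow_le_one₀ hp0.le hp1
  have hpTu'1 : p ^ Tu' ≤ 1 := pow_le_one₀ hp0.le hp1
  have hTuR1 : (1:ℝ) ≤ (Tu : ℝ) := by exact_mod_cast hTu
  have hSR1 : (1:ℝ) ≤ (Tp : ℝ) + (Tu' : ℝ) := by
    have h2 : (1:ℝ) ≤ (Tu' : ℝ) := by exact_mod_cast hTu'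
    have h1 : (0:ℝ) < (Tp : ℝ) := by exact_mod_cast hTp
    linarith
  have hc0 : 0 < c := div_pos hSR (mul_pos heps0 hpTu')
  -- key coefficient bounds
  have key2 : (eps / ((Tp : ℝ) + (Tu' : ℝ))) * p ^ Tu' * c = 1 := by
    rw [hc]; field_simp
  have key1 : (eps / (Tu : ℝ)) * p ^ Tu * c ≤ 1 := by
    have h : (eps / (Tu : ℝ)) * p ^ Tu * c
        = (p ^ Tu / (Tu : ℝ)) * (((Tp : ℝ) + (Tu' : ℝ)) / p ^ Tu') := by
      rw [hc]; field_simp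
    rw [h]
    have hdiv : (0:ℝ) ≤ p ^ Tu / (Tu : ℝ) := le_of_lt (div_pos hpTu hTuR)
    calc (p ^ Tu / (Tu : ℝ)) * (((Tp : ℝ) + (Tu' : ℝ)) / p ^ Tu')
        ≤ (p ^ Tu / (Tu : ℝ)) * ((Tu : ℝ) / p ^ Tu) :=
          mul_le_mul_of_nonneg_left hcase hdiv
      _ = 1 := by field_simp
  intro k
  induction k with
  | zero =>
    intro s1 s2 h12
    simp only [Function.iterate_zero, id_eq]
    ring_nf
    linarith [le_refl (c * ((s2:ℝ) - (s1:ℝ)))]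
  | succ k ih =>
    intro s1 s2 h12
    set V : ℕ → ℝ :=
      (Tbell Tu Tu' Tp Cu Cp om p eps)^[k] (fun s => c * (s : ℝ)) with hV
    have hstep : ∀ s : ℕ,
        (Tbell Tu Tu' Tp Cu Cp om p eps)^[k+1] (fun s => c * (s : ℝ)) s
          = Tbell Tu Tu' Tp Cu Cp om p eps V s := by
      intro s
      rw [Function.iterate_succ_apply']
    rw [hstep s1, hstep s2]
    have hΔ : (0:ℝ) ≤ (s2:ℝ) - (s1:ℝ) := by
      have : (s1:ℝ) ≤ (s2:ℝ) := by exact_mod_cast h12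
      linarith
    set Δ : ℝ := (s2:ℝ) - (s1:ℝ) with hdΔ
    have d0 : Q0 eps V s2 - Q0 eps V s1 ≥ c * Δ := by
      have h1 : V s2 - V s1 ≥ c * Δ := ih s1 s2 h12
      have h2 : V (s2+1) - V (s1+1) ≥ c * ((↑(s2+1):ℝ) - (↑(s1+1):ℝ)) :=
        ih (s1+1) (s2+1) (by omega)
      have h2' : V (s2+1) - V (s1+1) ≥ c * Δ := by
        push_cast at h2; rw [hdΔ]; linarith
      unfold Q0
      linarith [mul_nonneg (by linarith : (0:ℝ) ≤ 1 - eps) (by linarith : (0:ℝ) ≤ V s2 - V s1 - c * Δ),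
        mul_nonneg heps0.le (by linarith : (0:ℝ) ≤ V (s2+1) - V (s1+1) - c * Δ),
        mul_nonneg hc0.le hΔ]
    have d1 : Q1 Tu Cu om p eps V s2 - Q1 Tu Cu om p eps V s1 ≥ c * Δ := by
      have h1 : V s2 - V s1 ≥ c * Δ := ih s1 s2 h12
      have h2 : V (s2+Tu) - V (s1+Tu) ≥ c * ((↑(s2+Tu):ℝ) - (↑(s1+Tu):ℝ)) :=
        ih (s1+Tu) (s2+Tu) (by omega)
      have h2' : V (s2+Tu) - V (s1+Tu) ≥ c * Δ := by
        push_cast at h2; rw [hdΔ]; linarith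
      have hcoef : (0:ℝ) ≤ 1 - eps / (Tu : ℝ) := by
        have : eps / (Tu : ℝ) ≤ 1 := by
          rw [div_le_one hTuR]; linarith
        linarith
      have hcoef2 : (0:ℝ) ≤ (eps / (Tu : ℝ)) * (1 - p ^ Tu) := by
        apply mul_nonneg (le_of_lt (div_pos heps0 hTuR)); linarith
      unfold Q1
      linarith [mul_nonneg hcoef (by linarith : (0:ℝ) ≤ V s2 - V s1 - c * Δ),
        mul_nonneg hcoef2 (by linarith : (0:ℝ) ≤ V (s2+Tu) - V (s1+Tu) - c * Δ),
        mul_nonneg (by linarith : (0:ℝ) ≤ 1 - (eps / (Tu : ℝ)) * p ^ Tu * c) hΔ]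
    have d2 : Q2 Tu' Tp Cu Cp om p eps V s2 - Q2 Tu' Tp Cu Cp om p eps V s1 ≥ c * Δ := by
      have h1 : V s2 - V s1 ≥ c * Δ := ih s1 s2 h12
      have h2 : V (s2+(Tp+Tu')) - V (s1+(Tp+Tu')) ≥ c * ((↑(s2+(Tp+Tu')):ℝ) - (↑(s1+(Tp+Tu')):ℝ)) :=
        ih (s1+(Tp+Tu')) (s2+(Tp+Tu')) (by omega)
      have h2' : V (s2+(Tp+Tu')) - V (s1+(Tp+Tu')) ≥ c * Δ := by
        push_cast at h2; rw [hdΔ]; linarith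
      have hcoef : (0:ℝ) ≤ 1 - eps / ((Tp : ℝ) + (Tu' : ℝ)) := by
        have : eps / ((Tp : ℝ) + (Tu' : ℝ)) ≤ 1 := by
          rw [div_le_one hSR]; linarith
        linarith
      have hcoef2 : (0:ℝ) ≤ (eps / ((Tp : ℝ) + (Tu' : ℝ))) * (1 - p ^ Tu') := by
        apply mul_nonneg (le_of_lt (div_pos heps0 hSR)); linarith
      unfold Q2
      have hcast : ((↑(Tp + Tu') : ℝ)) = (Tp : ℝ) + (Tu' : ℝ) := by push_cast; ring
      linarith [mul_nonneg hcoef (by linarith : (0:ℝ) ≤ V s2 - V s1 - c * Δ),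
        mul_nonneg hcoef2 (by linarith : (0:ℝ) ≤ V (s2+(Tp+Tu')) - V (s1+(Tp+Tu')) - c * Δ),
        mul_nonneg (by linarith [key2] : (0:ℝ) ≤ 1 - (eps / ((Tp : ℝ) + (Tu' : ℝ))) * p ^ Tu' * c) hΔ]
    -- combine via min
    have hmin : Tbell Tu Tu' Tp Cu Cp om p eps V s1 + c * Δ
        ≤ Tbell Tu Tu' Tp Cu Cp om p eps V s2 := by
      unfold Tbell
      rw [← min_add_add_right, ← min_add_add_right]
      exact min_le_min (by linarith) (min_le_min (by linarith) (by linarith))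
    linarith
end

section
/- Suppose V : ℕ → ℝ is concave and has slope at least T_u/(ε·p^{T_u}). Then for all s1 ≤ s2, Q1(V,s2) − Q1(V,s1) ≤ V(s2) − V(s1). -/
theorem stmt7 (Tu Tu' Tp : ℕ) (hTu : 0 < Tu) (hTu' : 0 < Tu') (hTp : 0 < Tp)
    (Cu Cp om p eps : ℝ) (hCu : 0 ≤ Cu) (hCp : 0 ≤ Cp) (hom : 0 ≤ om)
    (hp0 : 0 < p) (hp1 : p ≤ 1) (heps0 : 0 < eps) (heps1 : eps ≤ 1)
    (V : ℕ → ℝ)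
    (hconc : ∀ s1 s2 w : ℕ, s1 ≤ s2 → V (s1 + w) - V s1 ≥ V (s2 + w) - V s2)
    (hslope : ∀ s1 s2 : ℕ, s1 ≤ s2 → V s2 - V s1 ≥ ((Tu : ℝ) / (eps * p ^ Tu)) * ((s2 : ℝ) - (s1 : ℝ))) :
    ∀ s1 s2 : ℕ, s1 ≤ s2 →
      Q1 Tu Cu om p eps V s2 - Q1 Tu Cu om p eps V s1 ≤ V s2 - V s1 := by
  intro s1 s2 h12
  have hpT : (0:ℝ) < p ^ Tu := pow_pos hp0 Tu
  have hpT1 : p ^ Tu ≤ 1 := pow_le_one₀ hp0.le hp1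
  have hTuR : (0:ℝ) < (Tu:ℝ) := Nat.cast_pos.mpr hTu
  have hE := hconc s1 s2 Tu h12
  have hD := hslope s1 s2 h12
  have hkey : ((Tu:ℝ) / (eps * p ^ Tu)) * (eps / Tu * p ^ Tu) = 1 := by
    field_simp
  have hcoef : (0:ℝ) ≤ eps / Tu * (1 - p ^ Tu) := mul_nonneg (by positivity) (by linarith)
  have hED : V (s2 + Tu) - V (s1 + Tu) ≤ V s2 - V s1 := by linarith
  simp only [Q1]
  have hcast : (s1:ℝ) ≤ (s2:ℝ) := Nat.cast_le.mpr h12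
  nlinarith [mul_le_mul_of_nonneg_left hED hcoef,
    mul_le_mul_of_nonneg_left hD (le_of_lt (by positivity : (0:ℝ) < eps / Tu * p ^ Tu))]
end

section
/- Suppose V : ℕ → ℝ is concave and has slope at least (T_p+T_u')/(ε·p^{T_u'}). Then for all s1 ≤ s2, Q2(V,s2) − Q2(V,s1) ≤ V(s2) − V(s1). -/
theorem stmt8 (Tu Tu' Tp : ℕ) (hTu : 0 < Tu) (hTu' : 0 < Tu') (hTp : 0 < Tp)
    (Cu Cp om p eps : ℝ) (hCu : 0 ≤ Cu) (hCp : 0 ≤ Cp) (hom : 0 ≤ om)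
    (hp0 : 0 < p) (hp1 : p ≤ 1) (heps0 : 0 < eps) (heps1 : eps ≤ 1)
    (V : ℕ → ℝ)
    (hconc : ∀ s1 s2 w : ℕ, s1 ≤ s2 → V (s1 + w) - V s1 ≥ V (s2 + w) - V s2)
    (hslope : ∀ s1 s2 : ℕ, s1 ≤ s2 → V s2 - V s1 ≥ (((Tp : ℝ) + (Tu' : ℝ)) / (eps * p ^ Tu')) * ((s2 : ℝ) - (s1 : ℝ))) :
    ∀ s1 s2 : ℕ, s1 ≤ s2 →
      Q2 Tu' Tp Cu Cp om p eps V s2 - Q2 Tu' Tp Cu Cp om p eps V s1 ≤ V s2 - V s1 := by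
  intro s1 s2 h
  have hTpos : (0:ℝ) < (Tp:ℝ) + (Tu':ℝ) := by
    have h1 : (0:ℝ) < (Tp:ℝ) := Nat.cast_pos.mpr hTp
    have h2 : (0:ℝ) < (Tu':ℝ) := Nat.cast_pos.mpr hTu'
    linarith
  have hq : (0:ℝ) < p ^ Tu' := pow_pos hp0 _
  have hq1 : p ^ Tu' ≤ 1 := pow_le_one₀ hp0.le hp1
  have hc := hconc s1 s2 (Tp + Tu') h
  have hs := hslope s1 s2 h
  have hd : (0:ℝ) ≤ (s2:ℝ) - (s1:ℝ) := by
    have := (Nat.cast_le (α := ℝ)).mpr h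
    linarith
  have key : (s2:ℝ) - (s1:ℝ) ≤ (eps/((Tp:ℝ)+(Tu':ℝ))) * p^Tu' * (V s2 - V s1) := by
    have h2 : eps/((Tp:ℝ)+(Tu':ℝ)) * p^Tu' * (((Tp:ℝ)+(Tu':ℝ))/(eps*p^Tu') * ((s2:ℝ)-(s1:ℝ))) = (s2:ℝ)-(s1:ℝ) := by
      field_simp
    nlinarith [mul_pos (div_pos heps0 hTpos) hq, hs]
  have hcc : V (s2+(Tp+Tu')) - V (s1+(Tp+Tu')) ≤ V s2 - V s1 := by linarith
  have hmul : (eps/((Tp:ℝ)+(Tu':ℝ)))*(1-p^Tu') * (V (s2+(Tp+Tu')) - V (s1+(Tp+Tu'))) ≤ (eps/((Tp:ℝ)+(Tu':ℝ)))*(1-p^Tu') * (V s2 - V s1) := by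
    apply mul_le_mul_of_nonneg_left hcc
    have : (0:ℝ) < eps/((Tp:ℝ)+(Tu':ℝ)) := div_pos heps0 hTpos
    nlinarith
  simp only [Q2]
  nlinarith [hmul, key]
end

section
/- Threshold structure of the optimal policy, case A. Suppose T_u/p^{T_u} ≤ (T_p+T_u')/p^{T_u'}. Let (θ,V) be a Bellman solution such that V is concave and has slope at least T_u/(ε·p^{T_u}). If s1 ≤ s2 and θ + V(s1) = Q1(V,s1) (i.e., direct transmission is optimal at s1), then θ + V(s2) = Q1(V,s2) (direct transmission is optimal at s2). -/
theorem stmt9 (Tu Tu' Tp : ℕ) (hTu : 0 < Tu) (hTu' : 0 < Tu') (hTp : 0 < Tp)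
    (Cu Cp om p eps : ℝ) (hCu : 0 ≤ Cu) (hCp : 0 ≤ Cp) (hom : 0 ≤ om)
    (hp0 : 0 < p) (hp1 : p ≤ 1) (heps0 : 0 < eps) (heps1 : eps ≤ 1)
    (hcase : (Tu : ℝ) / p ^ Tu ≤ ((Tp : ℝ) + (Tu' : ℝ)) / p ^ Tu')
    (th : ℝ) (V : ℕ → ℝ)
    (hbell : ∀ s : ℕ, th + V s =
      min (Q0 eps V s) (min (Q1 Tu Cu om p eps V s) (Q2 Tu' Tp Cu Cp om p eps V s)))
    (hconc : ∀ s1 s2 w : ℕ, s1 ≤ s2 → V (s1 + w) - V s1 ≥ V (s2 + w) - V s2)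
    (hslope : ∀ s1 s2 : ℕ, s1 ≤ s2 → V s2 - V s1 ≥ ((Tu : ℝ) / (eps * p ^ Tu)) * ((s2 : ℝ) - (s1 : ℝ)))
    (s1 s2 : ℕ) (h12 : s1 ≤ s2)
    (hopt1 : th + V s1 = Q1 Tu Cu om p eps V s1) :
    th + V s2 = Q1 Tu Cu om p eps V s2 := by
  induction s2, h12 using Nat.le_induction with
  | base => exact hopt1
  | succ n hn ih =>
    have hTuR : (0:ℝ) < (Tu:ℝ) := by exact_mod_cast hTu
    have hq : (0:ℝ) < p ^ Tu := pow_pos hp0 Tu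
    have hq1 : p ^ Tu ≤ 1 := pow_le_one₀ (le_of_lt hp0) hp1
    have hd : V (n+1) - V n ≥ (Tu:ℝ)/(eps * p^Tu) := by
      have := hslope n (n+1) (Nat.le_succ n)
      push_cast at this
      linarith
    have hcv : V (n + Tu + 1) - V (n + Tu) ≤ V (n+1) - V n := by
      have := hconc n (n + Tu) 1 (Nat.le_add_right n Tu)
      linarith
    have haqd : (eps / (Tu:ℝ)) * p ^ Tu * (V (n+1) - V n) ≥ 1 := by
      have h1 : (eps / (Tu:ℝ)) * p ^ Tu * ((Tu:ℝ)/(eps * p^Tu)) = 1 := by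
        field_simp
      have h2 : (0:ℝ) < (eps / (Tu:ℝ)) * p ^ Tu :=
        mul_pos (div_pos heps0 hTuR) hq
      nlinarith
    have hub : th + V (n+1) ≤ Q1 Tu Cu om p eps V (n+1) := by
      rw [hbell (n+1)]
      exact le_trans (min_le_right _ _) (min_le_left _ _)
    have hidx : n + 1 + Tu = n + Tu + 1 := by omega
    have hstep : Q1 Tu Cu om p eps V (n+1) ≤ th + V (n+1) := by
      have hQn : Q1 Tu Cu om p eps V n = th + V n := (ih).symm
      unfold Q1 at hQn ⊢
      rw [hidx]
      push_cast
      push_cast at hQn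
      have ha : (0:ℝ) ≤ eps / (Tu:ℝ) := le_of_lt (div_pos heps0 hTuR)
      nlinarith [mul_nonneg ha (sub_nonneg.mpr hq1),
        mul_le_mul_of_nonneg_left hcv (mul_nonneg ha (sub_nonneg.mpr hq1))]
    linarith
end

section
/- Threshold structure of the optimal policy, case B. Suppose (T_p+T-u')/p^{T_u'} ≤ T_u/p^{T_u}. Let (θ,V) be a Bellman solution such that V is concave and has slope at least (T_p+T_u')/(ε·p^{T_u'}). If s1 ≤ s2 and θ + V(s1) = Q2(V,s1) (i.e., preprocessing-and-transmission is optimal at s1), then θ + V(s2) = Q2(V,s2) (preprocessing-and-transmission is optimal at s2). -/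
theorem stmt10 (Tu Tu' Tp : ℕ) (hTu : 0 < Tu) (hTu' : 0 < Tu') (hTp : 0 < Tp)
    (Cu Cp om p eps : ℝ) (hCu : 0 ≤ Cu) (hCp : 0 ≤ Cp) (hom : 0 ≤ om)
    (hp0 : 0 < p) (hp1 : p ≤ 1) (heps0 : 0 < eps) (heps1 : eps ≤ 1)
    (hcase : ((Tp : ℝ) + (Tu' : ℝ)) / p ^ Tu' ≤ (Tu : ℝ) / p ^ Tu)
    (th : ℝ) (V : ℕ → ℝ)
    (hbell : ∀ s : ℕ, th + V s =
      min (Q0 eps V s) (min (Q1 Tu Cu om p eps V s) (Q2 Tu' Tp Cu Cp om p eps V s)))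
    (hconc : ∀ s1 s2 w : ℕ, s1 ≤ s2 → V (s1 + w) - V s1 ≥ V (s2 + w) - V s2)
    (hslope : ∀ s1 s2 : ℕ, s1 ≤ s2 → V s2 - V s1 ≥ (((Tp : ℝ) + (Tu' : ℝ)) / (eps * p ^ Tu')) * ((s2 : ℝ) - (s1 : ℝ)))
    (s1 s2 : ℕ) (h12 : s1 ≤ s2)
    (hopt1 : th + V s1 = Q2 Tu' Tp Cu Cp om p eps V s1) :
    th + V s2 = Q2 Tu' Tp Cu Cp om p eps V s2 := by
  have hNp : (0:ℝ) < (Tp : ℝ) + (Tu' : ℝ) := by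
    have h1 : (0:ℝ) < (Tp : ℝ) := by exact_mod_cast hTp
    have h2 : (0:ℝ) < (Tu' : ℝ) := by exact_mod_cast hTu'
    linarith
  have hq0 : 0 < p ^ Tu' := pow_pos hp0 _
  have hq1 : p ^ Tu' ≤ 1 := pow_le_one₀ hp0.le hp1
  have hmin : th + V s2 ≤ Q2 Tu' Tp Cu Cp om p eps V s2 := by
    rw [hbell s2]
    exact le_trans (min_le_right _ _) (min_le_right _ _)
  -- slope bound
  have hA := hslope s1 s2 h12
  rw [ge_iff_le, div_mul_eq_mul_div, div_le_iff₀ (by positivity)] at hA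
  -- concavity bound
  have hB : V (s2 + (Tp + Tu')) - V (s1 + (Tp + Tu')) ≤ V s2 - V s1 := by
    have := hconc s1 s2 (Tp + Tu') h12
    linarith
  set c : ℝ := eps / ((Tp : ℝ) + (Tu' : ℝ)) with hc
  have hceq : c * ((Tp : ℝ) + (Tu' : ℝ)) = eps := div_mul_cancel₀ _ hNp.ne'
  have hepsq : 0 ≤ eps * (1 - p ^ Tu') := by nlinarith
  have main : ((Tp : ℝ) + (Tu' : ℝ)) * ((s2 : ℝ) - (s1 : ℝ))
      - eps * (V s2 - V s1)
      + eps * (1 - p ^ Tu') * (V (s2 + (Tp + Tu')) - V (s1 + (Tp + Tu'))) ≤ 0 := by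
    nlinarith [mul_le_mul_of_nonneg_left hB hepsq]
  rw [← hceq] at main
  have hkey : Q2 Tu' Tp Cu Cp om p eps V s2 - V s2 ≤ Q2 Tu' Tp Cu Cp om p eps V s1 - V s1 := by
    simp only [Q2, ← hc]
    nlinarith [main, hNp]
  have : Q2 Tu' Tp Cu Cp om p eps V s2 ≤ th + V s2 := by linarith [hopt1]
  linarith [hmin, this]
end

section
/- Idle is never optimal (reliable channel, preprocessing case). Suppose p = 1, T_p+T_u' ≤ T_u, and (1/2)·(T_p+T_u')·(T_p+T_u'+1) ≥ ω·(T_p·C_p + T_u'·C_u). If V : ℕ → ℝ is nondecreasing and has slope at least (T_p+T_u')/ε, then Q0(V,s) ≥ Q2(V,s) for every s ≥ T_p+T_u'. -/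
theorem stmt11 (Tu Tu' Tp : ℕ) (hTu : 0 < Tu) (hTu' : 0 < Tu') (hTp : 0 < Tp)
    (Cu Cp om p eps : ℝ) (hCu : 0 ≤ Cu) (hCp : 0 ≤ Cp) (hom : 0 ≤ om)
    (hp0 : 0 < p) (hp1 : p ≤ 1) (heps0 : 0 < eps) (heps1 : eps ≤ 1)
    (hp : p = 1) (hTle : Tp + Tu' ≤ Tu)
    (hcost : (1 / 2) * ((Tp : ℝ) + (Tu' : ℝ)) * ((Tp : ℝ) + (Tu' : ℝ) + 1) ≥
      om * ((Tp : ℝ) * Cp + (Tu' : ℝ) * Cu))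
    (V : ℕ → ℝ)
    (hmono : ∀ s1 s2 : ℕ, s1 ≤ s2 → V s1 ≤ V s2)
    (hslope : ∀ s1 s2 : ℕ, s1 ≤ s2 →
      V s2 - V s1 ≥ (((Tp : ℝ) + (Tu' : ℝ)) / eps) * ((s2 : ℝ) - (s1 : ℝ))) :
    ∀ s : ℕ, Tp + Tu' ≤ s → Q0 eps V s ≥ Q2 Tu' Tp Cu Cp om p eps V s := by
  intro s hs
  have hpow : p ^ Tu' = 1 := by rw [hp, one_pow]
  have hT : (0 : ℝ) < (Tp : ℝ) + (Tu' : ℝ) := by positivity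
  have h1 := hslope s (s + 1) (Nat.le_succ s)
  push_cast at h1
  have h2 := hmono (Tp + Tu') s hs
  have hdiv : om * ((Tp : ℝ) * Cp + (Tu' : ℝ) * Cu) / ((Tp : ℝ) + (Tu' : ℝ)) ≤
      ((Tp : ℝ) + (Tu' : ℝ) + 1) / 2 := by
    rw [div_le_div_iff₀ hT (by norm_num)]
    nlinarith [hcost]
  simp only [Q0, Q2, hpow, ge_iff_le]
  have heT : 0 < eps / ((Tp : ℝ) + (Tu' : ℝ)) := by positivity
  have key : V (s + 1) - V s ≥ ((Tp : ℝ) + (Tu' : ℝ)) / eps := by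
    have := h1
    nlinarith
  have h3 : eps * (V (s + 1) - V s) ≥ (Tp : ℝ) + (Tu' : ℝ) := by
    have := mul_le_mul_of_nonneg_left key (le_of_lt heps0)
    calc ((Tp : ℝ) + (Tu' : ℝ)) = eps * (((Tp : ℝ) + (Tu' : ℝ)) / eps) := by
          field_simp
      _ ≤ eps * (V (s + 1) - V s) := this
  have h4 : eps / ((Tp : ℝ) + (Tu' : ℝ)) * (V (Tp + Tu') - V s) ≤ 0 :=
    mul_nonpos_of_nonneg_of_nonpos (le_of_lt heT) (by linarith)
  have hexp : eps / ((Tp : ℝ) + (Tu' : ℝ)) * ((Tp : ℝ) + (Tu' : ℝ)) = eps := by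
    field_simp
  rw [mul_div_assoc] at hdiv
  linarith
end

section
/- Idle is never optimal (reliable channel, direct-transmission case). Suppose p = 1, T_u ≤ T_p+T_u', and (1/2)·T_u·(T_u+1) ≥ ω·T_u·C_u. If V : ℕ → ℝ is nondecreasing and has slope at least T_u/ε, then Q0(V,s) ≥ Q1(V,s) for every s ≥ T_u. -/
theorem stmt12 (Tu Tu' Tp : ℕ) (hTu : 0 < Tu) (hTu' : 0 < Tu') (hTp : 0 < Tp)
    (Cu Cp om p eps : ℝ) (hCu : 0 ≤ Cu) (hCp : 0 ≤ Cp) (hom : 0 ≤ om)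
    (hp0 : 0 < p) (hp1 : p ≤ 1) (heps0 : 0 < eps) (heps1 : eps ≤ 1)
    (hp : p = 1) (hTle : Tu ≤ Tp + Tu')
    (hcost : (1 / 2) * (Tu : ℝ) * ((Tu : ℝ) + 1) ≥ om * (Tu : ℝ) * Cu)
    (V : ℕ → ℝ)
    (hmono : ∀ s1 s2 : ℕ, s1 ≤ s2 → V s1 ≤ V s2)
    (hslope : ∀ s1 s2 : ℕ, s1 ≤ s2 →
      V s2 - V s1 ≥ ((Tu : ℝ) / eps) * ((s2 : ℝ) - (s1 : ℝ))) :
    ∀ s : ℕ, Tu ≤ s → Q0 eps V s ≥ Q1 Tu Cu om p eps V s := by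
  intro s hs
  have hTuR : (0:ℝ) < (Tu:ℝ) := by exact_mod_cast hTu
  have h1 : V Tu ≤ V s := hmono Tu s hs
  have h2 : V (s+1) - V s ≥ ((Tu:ℝ)/eps) * ((s+1:ℕ) - (s:ℕ)) := hslope s (s+1) (by omega)
  have h2' : V (s+1) - V s ≥ (Tu:ℝ)/eps := by
    push_cast at h2; linarith
  have hc : ((Tu:ℝ)+1)/2 ≥ om * Cu := by
    nlinarith [hcost, hTuR]
  have hkey : eps * (V (s+1) - V s) ≥ (Tu:ℝ) := by
    have := mul_le_mul_of_nonneg_left h2' (le_of_lt heps0)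
    calc eps * (V (s+1) - V s) ≥ eps * ((Tu:ℝ)/eps) := by
          exact mul_le_mul_of_nonneg_left h2' (le_of_lt heps0)
      _ = (Tu:ℝ) := by field_simp
  have hfrac : eps / (Tu:ℝ) ≥ 0 := by positivity
  have h3 : (eps/(Tu:ℝ)) * (V s - V Tu) ≥ 0 := mul_nonneg hfrac (by linarith)
  simp only [Q0, Q1, hp, one_pow]
  have hkey' : eps * (V (1+s) - V s) ≥ (Tu:ℝ) := by rw [add_comm]; exact hkey
  have h3' : eps * (Tu:ℝ)⁻¹ * (V s - V Tu) ≥ 0 := by rw [← div_eq_mul_inv]; exact h3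
  ring_nf
  nlinarith [h3', hkey', hc]
end

section
/- Submodularity of the action-value difference over a reliable channel. Suppose p = 1 and T_p+T_u' ≤ T_u. If V : ℕ → ℝ is nondecreasing, then for all s1 ≤ s2: Q1(V,s1) − Q2(V,s1) ≤ Q1(V,s2) − Q2(V,s2). -/
theorem stmt13 (Tu Tu' Tp : ℕ) (hTu : 0 < Tu) (hTu' : 0 < Tu') (hTp : 0 < Tp)
    (Cu Cp om p eps : ℝ) (hCu : 0 ≤ Cu) (hCp : 0 ≤ Cp) (hom : 0 ≤ om)
    (hp0 : 0 < p) (hp1 : p ≤ 1) (heps0 : 0 < eps) (heps1 : eps ≤ 1)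
    (hp : p = 1) (hTle : Tp + Tu' ≤ Tu)
    (V : ℕ → ℝ)
    (hmono : ∀ s1 s2 : ℕ, s1 ≤ s2 → V s1 ≤ V s2) :
    ∀ s1 s2 : ℕ, s1 ≤ s2 →
      Q1 Tu Cu om p eps V s1 - Q2 Tu' Tp Cu Cp om p eps V s1 ≤
      Q1 Tu Cu om p eps V s2 - Q2 Tu' Tp Cu Cp om p eps V s2 := by
  intro s1 s2 hs
  subst hp
  have hT : (0:ℝ) < (Tp:ℝ) + (Tu':ℝ) := by positivity
  have hTu0 : (0:ℝ) < (Tu:ℝ) := by exact_mod_cast hTu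
  have hle : (Tp:ℝ) + (Tu':ℝ) ≤ (Tu:ℝ) := by exact_mod_cast hTle
  have hdiv : eps / (Tu:ℝ) ≤ eps / ((Tp:ℝ) + (Tu':ℝ)) :=
    div_le_div_of_nonneg_left heps0.le hT hle
  have hV := hmono s1 s2 hs
  have hcast : ((s1:ℝ)) ≤ (s2:ℝ) := by exact_mod_cast hs
  simp only [Q1, Q2, one_pow, sub_self, zero_mul, mul_zero, add_zero, mul_one]
  nlinarith [mul_le_mul_of_nonneg_right hdiv (sub_nonneg.mpr hV)]
end

section
/- The less energy-efficient action is never optimal over a reliable channel. Suppose p = 1, T_p+T_u' ≤ T_u, and C_u ≥ (T_p·C_p + T_u'·C_u)/(T_p+T_u'). If V : ℕ → ℝ is nondecreasing, then Q1(V,s) ≥ Q2(V,s) for every s ≥ T_p+T_u'. -/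
theorem stmt14 (Tu Tu' Tp : ℕ) (hTu : 0 < Tu) (hTu' : 0 < Tu') (hTp : 0 < Tp)
    (Cu Cp om p eps : ℝ) (hCu : 0 ≤ Cu) (hCp : 0 ≤ Cp) (hom : 0 ≤ om)
    (hp0 : 0 < p) (hp1 : p ≤ 1) (heps0 : 0 < eps) (heps1 : eps ≤ 1)
    (hp : p = 1) (hTle : Tp + Tu' ≤ Tu)
    (henergy : Cu ≥ ((Tp : ℝ) * Cp + (Tu' : ℝ) * Cu) / ((Tp : ℝ) + (Tu' : ℝ)))
    (V : ℕ → ℝ)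
    (hmono : ∀ s1 s2 : ℕ, s1 ≤ s2 → V s1 ≤ V s2) :
    ∀ s : ℕ, Tp + Tu' ≤ s → Q1 Tu Cu om p eps V s ≥ Q2 Tu' Tp Cu Cp om p eps V s := by
  intro s hs
  subst hp
  simp only [Q1, Q2, one_pow, sub_self, zero_mul, mul_zero, add_zero, mul_one]
  have hT' : (0:ℝ) < (Tp:ℝ) + (Tu':ℝ) := by positivity
  have hTuR : (0:ℝ) < (Tu:ℝ) := by exact_mod_cast hTu
  have hTle' : (Tp:ℝ) + (Tu':ℝ) ≤ (Tu:ℝ) := by exact_mod_cast hTle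
  have hab : eps / (Tu:ℝ) ≤ eps / ((Tp:ℝ) + (Tu':ℝ)) :=
    div_le_div_of_nonneg_left heps0.le hT' hTle'
  have ha : 0 < eps / (Tu:ℝ) := by positivity
  have h1 : V (Tp + Tu') ≤ V Tu := hmono _ _ hTle
  have h2 : V (Tp + Tu') ≤ V s := hmono _ _ hs
  have hom' : om * (((Tp : ℝ) * Cp + (Tu' : ℝ) * Cu) / ((Tp : ℝ) + (Tu' : ℝ))) ≤ om * Cu :=
    mul_le_mul_of_nonneg_left henergy hom
  have half : (((Tp : ℝ) + (Tu' : ℝ)) - 1) / 2 ≤ ((Tu : ℝ) - 1) / 2 := by linarith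
  nlinarith [mul_le_mul_of_nonneg_left h1 ha.le,
    mul_le_mul_of_nonneg_left h2 (sub_nonneg.mpr hab)]
end

section
/- Switch-type structure of the optimal policy between idling and updating (reliable channel). Suppose p = 1, T_p+T_u' ≤ T_u, and C_u ≥ (T_p·C_p + T_u'·C_u)/(T_p+T_u'). Let (θ,V) be a Bellman solution such that V is nondecreasing, concave, and has slope at least (T_p+T_u')/ε. Then: (i) for every s ≥ T_p+T_u', at least one of Q0(V,s) = θ + V(s) and Q2(V,s) = θ + V(s) holds; and (ii) the set of states s ≥ T_p+T_u' at which Q2(V,s) = θ + V(s) is upward closed, i.e., if it contains s1 and T_p+T_u' ≤ s1 ≤ s2 then it contains s2. -/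
theorem stmt15 (Tu Tu' Tp : ℕ) (hTu : 0 < Tu) (hTu' : 0 < Tu') (hTp : 0 < Tp)
    (Cu Cp om p eps : ℝ) (hCu : 0 ≤ Cu) (hCp : 0 ≤ Cp) (hom : 0 ≤ om)
    (hp0 : 0 < p) (hp1 : p ≤ 1) (heps0 : 0 < eps) (heps1 : eps ≤ 1)
    (hp : p = 1) (hTle : Tp + Tu' ≤ Tu)
    (henergy : Cu ≥ ((Tp : ℝ) * Cp + (Tu' : ℝ) * Cu) / ((Tp : ℝ) + (Tu' : ℝ)))
    (th : ℝ) (V : ℕ → ℝ)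
    (hbell : ∀ s : ℕ, th + V s =
      min (Q0 eps V s) (min (Q1 Tu Cu om p eps V s) (Q2 Tu' Tp Cu Cp om p eps V s)))
    (hmono : ∀ s1 s2 : ℕ, s1 ≤ s2 → V s1 ≤ V s2)
    (hconc : ∀ s1 s2 w : ℕ, s1 ≤ s2 → V (s1 + w) - V s1 ≥ V (s2 + w) - V s2)
    (hslope : ∀ s1 s2 : ℕ, s1 ≤ s2 →
      V s2 - V s1 ≥ (((Tp : ℝ) + (Tu' : ℝ)) / eps) * ((s2 : ℝ) - (s1 : ℝ))) :
    (∀ s : ℕ, Tp + Tu' ≤ s →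
      Q0 eps V s = th + V s ∨ Q2 Tu' Tp Cu Cp om p eps V s = th + V s) ∧
    (∀ s1 s2 : ℕ, Tp + Tu' ≤ s1 → s1 ≤ s2 →
      Q2 Tu' Tp Cu Cp om p eps V s1 = th + V s1 →
      Q2 Tu' Tp Cu Cp om p eps V s2 = th + V s2) := by
  subst hp
  set T : ℕ := Tp + Tu' with hT
  have hTr0 : (0:ℝ) < (Tp:ℝ) + (Tu':ℝ) := by positivity
  have hTu0 : (0:ℝ) < (Tu:ℝ) := by exact_mod_cast hTu
  have hTleR : (Tp:ℝ) + (Tu':ℝ) ≤ (Tu:ℝ) := by exact_mod_cast hTle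
  -- Q2 ≤ Q1 for s ≥ T
  have hQ21 : ∀ s : ℕ, T ≤ s →
      Q2 Tu' Tp Cu Cp om 1 eps V s ≤ Q1 Tu Cu om 1 eps V s := by
    intro s hs
    have ha : V T ≤ V s := hmono T s hs
    have hb : V T ≤ V Tu := hmono T Tu hTle
    have hBA : eps / (Tu:ℝ) ≤ eps / ((Tp:ℝ) + (Tu':ℝ)) :=
      div_le_div_of_nonneg_left heps0.le hTr0 hTleR
    have hB : (0:ℝ) < eps / (Tu:ℝ) := by positivity
    have hE : 0 ≤ om * (Cu - ((Tp:ℝ) * Cp + (Tu':ℝ) * Cu) / ((Tp:ℝ) + (Tu':ℝ))) :=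
      mul_nonneg hom (by linarith [henergy])
    simp only [Q1, Q2, one_pow, sub_self, zero_mul, mul_zero, mul_one, add_zero]
    nlinarith [mul_nonneg (sub_nonneg.2 hBA) (sub_nonneg.2 ha),
      mul_nonneg hB.le (sub_nonneg.2 hb)]
  constructor
  · intro s hs
    have h := hbell s
    rw [min_eq_right (hQ21 s hs)] at h
    rcases le_total (Q0 eps V s) (Q2 Tu' Tp Cu Cp om 1 eps V s) with hc | hc
    · left; rw [min_eq_left hc] at h; exact h.symm
    · right; rw [min_eq_right hc] at h; exact h.symm
  · intro s1 s2 hs1 h12 heq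
    have hle : th + V s2 ≤ Q2 Tu' Tp Cu Cp om 1 eps V s2 := by
      rw [hbell s2]
      exact le_trans (min_le_right _ _) (min_le_right _ _)
    have hge : Q2 Tu' Tp Cu Cp om 1 eps V s2 ≤ th + V s2 := by
      have hsl := hslope s1 s2 h12
      have hd : (s1:ℝ) ≤ (s2:ℝ) := by exact_mod_cast h12
      have hkey : (s2:ℝ) - (s1:ℝ) ≤ eps / ((Tp:ℝ) + (Tu':ℝ)) * (V s2 - V s1) := by
        have h1 : eps / ((Tp:ℝ) + (Tu':ℝ)) * ((((Tp:ℝ) + (Tu':ℝ)) / eps) * ((s2:ℝ) - (s1:ℝ)))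
            = (s2:ℝ) - (s1:ℝ) := by
          field_simp
        calc (s2:ℝ) - (s1:ℝ)
            = eps / ((Tp:ℝ) + (Tu':ℝ)) * ((((Tp:ℝ) + (Tu':ℝ)) / eps) * ((s2:ℝ) - (s1:ℝ))) :=
              h1.symm
          _ ≤ eps / ((Tp:ℝ) + (Tu':ℝ)) * (V s2 - V s1) := by
              apply mul_le_mul_of_nonneg_left hsl (by positivity)
      simp only [Q2, one_pow, sub_self, zero_mul, mul_zero, mul_one, add_zero] at heq ⊢
      nlinarith [hkey]
    linarith
end

section
/- Switch-type structure of the optimal policy between the two updating actions (reliable channel). Suppose p = 1, T_p+T_u' ≤ T_u, and (1/2)·(T_p+T_u')·(T_p+T_u'+1) ≥ ω·(T_p·C_p + T_u'·C_u). Let (θ,V) be a Bellman solution such that V is nondecreasing, concave, and has slope at least (T_p+T_u')/ε. Then: (i) for every s ≥ T_p+T_u', at least one of Q1(V,s) = θ + V(s) and Q2(V,s) = θ + V(s) holds; and (ii) the set of states s ≥ T_p+T_u' at which Q2(V,s) = θ + V(s) is upward closed, i.e., if it contains s1 and T_p+T_u' ≤ s1 ≤ s2 then it contains s2. -/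
theorem stmt16 (Tu Tu' Tp : ℕ) (hTu : 0 < Tu) (hTu' : 0 < Tu') (hTp : 0 < Tp)
    (Cu Cp om p eps : ℝ) (hCu : 0 ≤ Cu) (hCp : 0 ≤ Cp) (hom : 0 ≤ om)
    (hp0 : 0 < p) (hp1 : p ≤ 1) (heps0 : 0 < eps) (heps1 : eps ≤ 1)
    (hp : p = 1) (hTle : Tp + Tu' ≤ Tu)
    (hcost : (1 / 2) * ((Tp : ℝ) + (Tu' : ℝ)) * ((Tp : ℝ) + (Tu' : ℝ) + 1) ≥
      om * ((Tp : ℝ) * Cp + (Tu' : ℝ) * Cu))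
    (th : ℝ) (V : ℕ → ℝ)
    (hbell : ∀ s : ℕ, th + V s =
      min (Q0 eps V s) (min (Q1 Tu Cu om p eps V s) (Q2 Tu' Tp Cu Cp om p eps V s)))
    (hmono : ∀ s1 s2 : ℕ, s1 ≤ s2 → V s1 ≤ V s2)
    (hconc : ∀ s1 s2 w : ℕ, s1 ≤ s2 → V (s1 + w) - V s1 ≥ V (s2 + w) - V s2)
    (hslope : ∀ s1 s2 : ℕ, s1 ≤ s2 →
      V s2 - V s1 ≥ (((Tp : ℝ) + (Tu' : ℝ)) / eps) * ((s2 : ℝ) - (s1 : ℝ))) :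
    (∀ s : ℕ, Tp + Tu' ≤ s →
      Q1 Tu Cu om p eps V s = th + V s ∨ Q2 Tu' Tp Cu Cp om p eps V s = th + V s) ∧
    (∀ s1 s2 : ℕ, Tp + Tu' ≤ s1 → s1 ≤ s2 →
      Q2 Tu' Tp Cu Cp om p eps V s1 = th + V s1 →
      Q2 Tu' Tp Cu Cp om p eps V s2 = th + V s2) := by
  subst hp
  set N : ℝ := (Tp : ℝ) + (Tu' : ℝ) with hNdef
  have hN : 0 < N := by
    have : (0:ℝ) < (Tp:ℝ) := by exact_mod_cast hTp
    have h2 : (0:ℝ) ≤ (Tu':ℝ) := by positivity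
    linarith
  have hTuR : (0:ℝ) < (Tu:ℝ) := by exact_mod_cast hTu
  have hNTu : N ≤ (Tu:ℝ) := by
    rw [hNdef]; exact_mod_cast hTle
  -- cost bound in divided form
  have hcost' : om * (((Tp : ℝ) * Cp + (Tu' : ℝ) * Cu) / N) ≤ (N + 1) / 2 := by
    rw [mul_div_assoc', div_le_div_iff₀ hN (by norm_num : (0:ℝ) < 2)]
    nlinarith [hcost]
  -- Q2 ≤ Q0 for s ≥ Tp + Tu'
  have hA : ∀ s : ℕ, Tp + Tu' ≤ s → Q2 Tu' Tp Cu Cp om 1 eps V s ≤ Q0 eps V s := by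
    intro s hs
    have hsl := hslope s (s + 1) (Nat.le_succ s)
    have hcast : ((s + 1 : ℕ) : ℝ) - (s : ℝ) = 1 := by push_cast; ring
    rw [hcast, mul_one] at hsl
    have hAe : eps * (V (s + 1) - V s) ≥ N := by
      have h1 := mul_le_mul_of_nonneg_left hsl heps0.le
      have h2 : eps * (N / eps) = N := by field_simp
      linarith [h1, h2]
    have hm : V (Tp + Tu') ≤ V s := hmono _ _ hs
    have hm' : 0 ≤ (eps / N) * (V s - V (Tp + Tu')) := by
      apply mul_nonneg (by positivity)
      linarith
    have key : Q0 eps V s - Q2 Tu' Tp Cu Cp om 1 eps V s =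
        eps * (V (s + 1) - V s) + (eps / N) * (V s - V (Tp + Tu'))
          - (N - 1) / 2 - om * (((Tp : ℝ) * Cp + (Tu' : ℝ) * Cu) / N) := by
      unfold Q0 Q2; rw [← hNdef]; ring
    linarith [key, hAe, hm', hcost']
  -- Q1 - Q2 is nondecreasing
  have hB : ∀ s1 s2 : ℕ, s1 ≤ s2 →
      Q1 Tu Cu om 1 eps V s1 - Q2 Tu' Tp Cu Cp om 1 eps V s1 ≤
      Q1 Tu Cu om 1 eps V s2 - Q2 Tu' Tp Cu Cp om 1 eps V s2 := by
    intro s1 s2 h12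
    have key : (Q1 Tu Cu om 1 eps V s2 - Q2 Tu' Tp Cu Cp om 1 eps V s2)
        - (Q1 Tu Cu om 1 eps V s1 - Q2 Tu' Tp Cu Cp om 1 eps V s1)
        = (eps / N - eps / (Tu:ℝ)) * (V s2 - V s1) := by
      unfold Q1 Q2; rw [← hNdef]; ring
    have hco : eps / (Tu:ℝ) ≤ eps / N :=
      div_le_div_of_nonneg_left heps0.le hN hNTu
    have hVm : V s1 ≤ V s2 := hmono _ _ h12
    nlinarith [key, mul_nonneg (sub_nonneg.mpr hco) (sub_nonneg.mpr hVm)]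
  constructor
  · intro s hs
    have hb := hbell s
    have hmin : th + V s = min (Q1 Tu Cu om 1 eps V s) (Q2 Tu' Tp Cu Cp om 1 eps V s) := by
      rw [hb, min_eq_right]
      exact le_trans (min_le_right _ _) (hA s hs)
    rcases le_total (Q1 Tu Cu om 1 eps V s) (Q2 Tu' Tp Cu Cp om 1 eps V s) with h | h
    · left; rw [hmin, min_eq_left h]
    · right; rw [hmin, min_eq_right h]
  · intro s1 s2 h1 h12 hq2
    have hs2 : Tp + Tu' ≤ s2 := le_trans h1 h12
    have hQ0 : Q2 Tu' Tp Cu Cp om 1 eps V s2 ≤ Q0 eps V s2 := hA s2 hs2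
    have hQ1s1 : Q2 Tu' Tp Cu Cp om 1 eps V s1 ≤ Q1 Tu Cu om 1 eps V s1 := by
      rw [hq2, hbell s1]
      exact le_trans (min_le_right _ _) (min_le_left _ _)
    have hQ1 : Q2 Tu' Tp Cu Cp om 1 eps V s2 ≤ Q1 Tu Cu om 1 eps V s2 := by
      have := hB s1 s2 h12
      linarith
    have hb := hbell s2
    rw [min_eq_right hQ1, min_eq_right hQ0] at hb
    exact hb.symm
end
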